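/- arXiv:2402.03520 — 7 statements merged into one kernel-verified Lean document; each statement's English description precedes it below -/
import Mathlib

section
/- Let G be a bipartite graph with bipartition L ∪ R where every vertex in L has degree in the interval [m_L, M_L] and every vertex in R has degree in [m_R, M_R], with all of these positive. Then there exists a coupling γ of the uniform distributions on L and on R such that when (v,w) is sampled from γ, the probability that vw is an edge of G is at least (m_L · m_R)/(M_L · M_R). -/
/-!
Put mass `c = m_R / (|L| M_L M_R)` on every edge. Every row of this partial coupling has
mass at most `c M_L ≤ 1 / |L|`, and every column at most `c M_R ≤ 1 / |R|` because double
counting the edges gives `|R| m_R ≤ |L| M_L`. The remaining row and column deficits have the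
same total, so their normalised product completes the partial coupling to a coupling of the
uniform distributions, and the edges keep mass at least `c |L| m_L = m_L m_R / (M_L M_R)`.
-/

open Finset

section Marginals

variable {K α β : Type*} [Field K] [LinearOrder K] [IsStrictOrderedRing K] [Fintype α]
  [Fintype β]

theorem exists_nonneg_with_marginals {r : α → K} {s : β → K} (hr : ∀ a, 0 ≤ r a)
    (hs : ∀ b, 0 ≤ s b) (hrs : ∑ a, r a = ∑ b, s b) :
    ∃ π : α → β → K, (∀ a b, 0 ≤ π a b) ∧ (∀ a, ∑ b, π a b = r a) ∧
      (∀ b, ∑ a, π a b = s b) := by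
  set t := ∑ a, r a
  by_cases ht0 : t = 0
  · have hr0 : ∀ a, r a = 0 := fun a =>
      (sum_eq_zero_iff_of_nonneg fun a _ => hr a).1 ht0 a (mem_univ a)
    have hs0 : ∀ b, s b = 0 := fun b =>
      (sum_eq_zero_iff_of_nonneg fun b _ => hs b).1 (hrs ▸ ht0) b (mem_univ b)
    exact ⟨0, fun _ _ => le_rfl, by simp [hr0], by simp [hs0]⟩
  refine ⟨fun a b => r a * s b / t, fun a b => div_nonneg (mul_nonneg (hr a) (hs b))
    (sum_nonneg fun a _ => hr a), fun a => ?_, fun b => ?_⟩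
  · rw [← sum_div, ← mul_sum, ← hrs, mul_div_cancel_right₀ _ ht0]
  · rw [← sum_div, ← sum_mul, mul_div_cancel_left₀ _ ht0]

theorem exists_le_with_marginals (f : α → β → K) {p : α → K} {q : β → K}
    (hp : ∀ a, ∑ b, f a b ≤ p a) (hq : ∀ b, ∑ a, f a b ≤ q b)
    (hpq : ∑ a, p a = ∑ b, q b) :
    ∃ γ : α → β → K, (∀ a b, f a b ≤ γ a b) ∧ (∀ a, ∑ b, γ a b = p a) ∧
      (∀ b, ∑ a, γ a b = q b) := by
  have hdeficit : ∑ a, (p a - ∑ b, f a b) = ∑ b, (q b - ∑ a, f a b) := by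
    rw [sum_sub_distrib, sum_sub_distrib, hpq, sum_comm]
  obtain ⟨π, hπ, hrow, hcol⟩ := exists_nonneg_with_marginals (fun a => sub_nonneg.2 (hp a))
    (fun b => sub_nonneg.2 (hq b)) hdeficit
  refine ⟨f + π, fun a b => le_add_of_nonneg_right (hπ a b), fun a => ?_, fun b => ?_⟩
  · simp only [Pi.add_apply, sum_add_distrib, hrow, add_sub_cancel]
  · simp only [Pi.add_apply, sum_add_distrib, hcol, add_sub_cancel]

end Marginals

theorem sum_ite_const_eq_card_filter_mul {M β : Type*} [NonAssocSemiring M] [Fintype β]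
    (P : β → Prop) [DecidablePred P] (c : M) : ∑ b, (if P b then c else 0) = #{b | P b} * c := by
  rw [← sum_filter, sum_const, nsmul_eq_mul]

section Edges

variable {K α β : Type*} [Field K] [LinearOrder K] [IsStrictOrderedRing K] [Fintype α]
  [Fintype β] (E : α → β → Prop) [∀ a b, Decidable (E a b)]

theorem exists_marginals_edge_mass_ge {c : K} (hc : 0 ≤ c) {p : α → K} {q : β → K}
    (hp : ∀ a, #{b | E a b} * c ≤ p a) (hq : ∀ b, #{a | E a b} * c ≤ q b)
    (hpq : ∑ a, p a = ∑ b, q b) :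
    ∃ γ : α → β → K, (∀ a b, 0 ≤ γ a b) ∧ (∀ a, ∑ b, γ a b = p a) ∧
      (∀ b, ∑ a, γ a b = q b) ∧
      ∑ a, #{b | E a b} * c ≤ ∑ a, ∑ b, if E a b then γ a b else 0 := by
  obtain ⟨γ, hcγ, hrow, hcol⟩ := exists_le_with_marginals (fun a b => if E a b then c else 0)
    (fun a => (sum_ite_const_eq_card_filter_mul _ c).trans_le (hp a))
    (fun b => (sum_ite_const_eq_card_filter_mul _ c).trans_le (hq b)) hpq
  refine ⟨γ, fun a b => (ite_nonneg hc le_rfl).trans (hcγ a b), hrow, hcol, ?_⟩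
  simp only [← sum_ite_const_eq_card_filter_mul]
  gcongr with a _ b _
  split_ifs with h
  · simpa [h] using hcγ a b
  · rfl

end Edges

/-- Coupling of the uniform distributions on the two sides of a bipartite graph
with degree bounds, agreeing on an edge with probability at least
`m_L m_R / (M_L M_R)`. -/
theorem stmt1 (L R : Type*) [Fintype L] [Fintype R] [Nonempty L] [Nonempty R]
    (E : L → R → Prop) [∀ v w, Decidable (E v w)]
    (mL ML mR MR : ℕ) (hmL : 0 < mL) (hmR : 0 < mR)
    (hLdeg : ∀ v : L, mL ≤ (Finset.univ.filter (fun w => E v w)).card ∧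
      (Finset.univ.filter (fun w => E v w)).card ≤ ML)
    (hRdeg : ∀ w : R, mR ≤ (Finset.univ.filter (fun v => E v w)).card ∧
      (Finset.univ.filter (fun v => E v w)).card ≤ MR) :
    ∃ γ : L → R → ℝ,
      (∀ v w, 0 ≤ γ v w) ∧
      (∀ v, ∑ w, γ v w = 1 / Fintype.card L) ∧
      (∀ w, ∑ v, γ v w = 1 / Fintype.card R) ∧
      (mL * mR : ℝ) / (ML * MR) ≤ ∑ v, ∑ w, if E v w then γ v w else 0 := by
  obtain ⟨v₀⟩ := ‹Nonempty L›
  obtain ⟨w₀⟩ := ‹Nonempty R›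
  have hnL : (0 : ℝ) < Fintype.card L := by exact_mod_cast Fintype.card_pos
  have hnR : (0 : ℝ) < Fintype.card R := by exact_mod_cast Fintype.card_pos
  have hML : (0 : ℝ) < ML := by exact_mod_cast hmL.trans_le ((hLdeg v₀).1.trans (hLdeg v₀).2)
  have hmMR : (mR : ℝ) ≤ MR := by exact_mod_cast (hRdeg w₀).1.trans (hRdeg w₀).2
  have hMR : (0 : ℝ) < MR := (Nat.cast_pos.2 hmR).trans_le hmMR
  have hcount : (Fintype.card R * mR : ℝ) ≤ Fintype.card L * ML := by
    exact_mod_cast card_nsmul_le_card_nsmul' (s := univ) (t := univ) E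
      (fun w _ => (hRdeg w).1) (fun v _ => (hLdeg v).2)
  set c : ℝ := mR / (Fintype.card L * ML * MR)
  obtain ⟨γ, hγ, hrow, hcol, hmass⟩ := exists_marginals_edge_mass_ge E (c := c) (by positivity)
    (p := fun _ => 1 / (Fintype.card L : ℝ)) (q := fun _ => 1 / (Fintype.card R : ℝ))
    (fun v => calc _ ≤ (ML : ℝ) * c := by gcongr; exact_mod_cast (hLdeg v).2
      _ ≤ _ := by simp only [c]; field_simp; exact hmMR)
    (fun w => calc _ ≤ (MR : ℝ) * c := by gcongr; exact_mod_cast (hRdeg w).2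
      _ ≤ _ := by simp only [c]; field_simp; linarith)
    (by simp [hnL.ne', hnR.ne'])
  refine ⟨γ, hγ, hrow, hcol, le_trans ?_ hmass⟩
  calc (mL * mR : ℝ) / (ML * MR) = ∑ _v : L, mL * c := by
        simp only [sum_const, card_univ, nsmul_eq_mul, c]; field_simp
    _ ≤ ∑ v, #{w | E v w} * c := by gcongr with v; exact_mod_cast (hLdeg v).1
end

section
/- Let H be a bipartite graph with parts indexed by [q] ⊔ [q] and minimum degree at least q − Δ, where q ≥ 2Δ + 4. Identify perfect matchings of H with permutations ρ ∈ S_q such that (i, ρ(i)) ∈ E(H) for all i. Suppose (1,1) ∈ E(H) and let ρ be a perfect matching of H with ρ(1) = 1. Then the number of pairs (i,j) with i, j ∈ [q] \ {1}, i ≠ j, such that ρ∘(1 i j) is a perfect matching of H not containing the edge (1,1), is at least (q − Δ − 1)(q − 2Δ − 3). -/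
/-!
Take `j ≠ 1` with `(j,1) ∈ E(H)` (at least `q − Δ − 1` choices) and then `i ∉ {1, j}` with
`(1, ρ i)` and `(i, ρ j)` edges; both neighbourhoods have size `≥ q − Δ`, so they meet in
`≥ q − 2Δ` indices and at least `q − 2Δ − 2` choices of `i` remain. Then `ρ ∘ (1 i j)` matches
`1, i, j` to `ρ i, ρ j, 1` along these edges, and sends `1` to `ρ i ≠ 1`.
-/

open Equiv Finset

theorem Finset.card_filter_perm_apply {α : Type*} [Fintype α] (ρ : Perm α) (p : α → Prop)
    [DecidablePred p] : #{i | p (ρ i)} = #{y | p y} :=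
  card_nbij' ρ ρ.symm (fun i hi => by simpa using hi) (fun y hy => by simpa using hy)
    (fun i _ => ρ.symm_apply_apply i) (fun y _ => ρ.apply_symm_apply y)

theorem Finset.card_add_card_sub_card_univ_le {α : Type*} [Fintype α] [DecidableEq α]
    (s t : Finset α) : #s + #t - Fintype.card α ≤ #(s ∩ t) := by
  have := card_inter_add_card_union s t
  have := card_le_univ (s ∪ t)
  omega

theorem Finset.sum_card_le_card_of_forall_mem {α β : Type*} {A : Finset β} {B : β → Finset α}
    {S : Finset (α × β)} (h : ∀ j ∈ A, ∀ i ∈ B j, (i, j) ∈ S) : ∑ j ∈ A, #(B j) ≤ #S := by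
  rw [← card_sigma]
  refine card_le_card_of_injOn (fun x => (x.2, x.1)) (fun x hx => ?_) (fun x _ y _ hxy => ?_)
  · rw [mem_coe, mem_sigma] at hx
    exact h _ hx.1 _ hx.2
  · simp only [Prod.mk.injEq] at hxy
    exact Sigma.ext hxy.2 (heq_of_eq hxy.1)

namespace Equiv

variable {α : Type*} [DecidableEq α] {a i j x : α}

theorem swap_mul_swap_apply_left (hi : i ≠ a) (hj : j ≠ a) :
    (swap a i * swap i j) a = i := by
  simp [Perm.mul_apply, swap_apply_of_ne_of_ne hi.symm hj.symm]

theorem swap_mul_swap_apply_mid (hj : j ≠ a) (hij : i ≠ j) :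
    (swap a i * swap i j) i = j := by
  simp [Perm.mul_apply, swap_apply_of_ne_of_ne hj hij.symm]

theorem swap_mul_swap_apply_right : (swap a i * swap i j) j = a := by
  simp [Perm.mul_apply]

theorem swap_mul_swap_apply_of_ne (ha : x ≠ a) (hi : x ≠ i) (hj : x ≠ j) :
    (swap a i * swap i j) x = x := by
  simp [Perm.mul_apply, swap_apply_of_ne_of_ne hi hj, swap_apply_of_ne_of_ne ha hi]

end Equiv

section MatchingRotation

variable {α : Type*} [DecidableEq α] {E : α → α → Prop} {ρ : Perm α} {a i j : α}

/-- Composing with the 3-cycle `a ↦ i ↦ j ↦ a` reassigns `a`, `i`, `j` to `ρ i`, `ρ j`, `ρ a`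
and leaves every other assignment of `ρ` alone. -/
theorem forall_rel_mul_swap_mul_swap (hρ : ∀ x, E x (ρ x)) (hρa : ρ a = a) (hi : i ≠ a)
    (hj : j ≠ a) (hij : i ≠ j) (hEa : E a (ρ i)) (hEi : E i (ρ j)) (hEj : E j a) (x : α) :
    E x ((ρ * (swap a i * swap i j)) x) := by
  rw [Perm.mul_apply]
  rcases eq_or_ne x a with rfl | hxa
  · rwa [swap_mul_swap_apply_left hi hj]
  rcases eq_or_ne x i with rfl | hxi
  · rwa [swap_mul_swap_apply_mid hj hij]
  rcases eq_or_ne x j with rfl | hxj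
  · rwa [swap_mul_swap_apply_right, hρa]
  · rw [swap_mul_swap_apply_of_ne hxa hxi hxj]
    exact hρ x

theorem mul_swap_mul_swap_apply_ne (hρa : ρ a = a) (hi : i ≠ a) (hj : j ≠ a) :
    (ρ * (swap a i * swap i j)) a ≠ a := by
  rw [Perm.mul_apply, swap_mul_swap_apply_left hi hj, ← hρa]
  exact ρ.injective.ne hi

variable [Fintype α] [DecidableRel E]

theorem le_card_threeCycle_rematchings (Δ : ℕ)
    (hdegL : Fintype.card α - Δ ≤ #{y | E a y})
    (hdegR : ∀ y, Fintype.card α - Δ ≤ #{x | E x y})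
    (hρ : ∀ x, E x (ρ x)) (hρa : ρ a = a) :
    (Fintype.card α - Δ - 1) * (Fintype.card α - 2 * Δ - 2) ≤
      #{p : α × α | p.1 ≠ a ∧ p.2 ≠ a ∧ p.1 ≠ p.2 ∧
        (∀ x, E x ((ρ * (swap a p.1 * swap p.1 p.2)) x)) ∧
        (ρ * (swap a p.1 * swap p.1 p.2)) a ≠ a} := by
  set A : Finset α := ({x | E x a} : Finset α) \ {a}
  set B : α → Finset α := fun j => ({i | E a (ρ i) ∧ E i (ρ j)} : Finset α) \ {a, j}
  have hA : Fintype.card α - Δ - 1 ≤ #A :=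
    (Nat.sub_le_sub_right (hdegR a) 1).trans
      ((Nat.sub_le_sub_left (card_singleton a).le _).trans (le_card_sdiff _ _))
  have hB : ∀ j, Fintype.card α - 2 * Δ - 2 ≤ #(B j) := by
    intro j
    have hinter := card_add_card_sub_card_univ_le ({i | E a (ρ i)} : Finset α) {i | E i (ρ j)}
    rw [card_filter_perm_apply ρ (E a), ← filter_and] at hinter
    have hsdiff := le_card_sdiff {a, j} ({i | E a (ρ i) ∧ E i (ρ j)} : Finset α)
    have hdeg := hdegR (ρ j)
    have hpair := card_le_two (a := a) (b := j)
    show _ ≤ #(({i | E a (ρ i) ∧ E i (ρ j)} : Finset α) \ {a, j})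
    omega
  refine le_trans ?_ (sum_card_le_card_of_forall_mem (A := A) (B := B) ?_)
  · calc (Fintype.card α - Δ - 1) * (Fintype.card α - 2 * Δ - 2)
        _ ≤ #A * (Fintype.card α - 2 * Δ - 2) := Nat.mul_le_mul_right _ hA
        _ ≤ ∑ j ∈ A, #(B j) := by
          rw [← smul_eq_mul, ← sum_const]
          exact sum_le_sum fun j _ => hB j
  · intro j hj i hi
    simp only [A, B, mem_sdiff, mem_filter, mem_univ, true_and, mem_insert, mem_singleton,
      not_or] at hj hi
    obtain ⟨hEj, hja⟩ := hj
    obtain ⟨⟨hEa, hEi⟩, hia, hij⟩ := hi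
    simp only [mem_filter, mem_univ, true_and]
    exact ⟨hia, hja, hij, forall_rel_mul_swap_mul_swap hρ hρa hia hja hij hEa hEi hEj,
      mul_swap_mul_swap_apply_ne hρa hia hja⟩

end MatchingRotation

theorem stmt5_general (q Δ : ℕ) [NeZero q]
    (E : Fin q → Fin q → Prop) [DecidableRel E]
    (hdegL : ∀ i, q - Δ ≤ (univ.filter (fun j => E i j)).card)
    (hdegR : ∀ j, q - Δ ≤ (univ.filter (fun i => E i j)).card)
    (ρ : Perm (Fin q)) (hρ : ∀ i, E i (ρ i)) (hρ0 : ρ 0 = 0) :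
    (q - Δ - 1) * (q - 2 * Δ - 3) ≤
      (univ.filter (fun p : Fin q × Fin q =>
        p.1 ≠ 0 ∧ p.2 ≠ 0 ∧ p.1 ≠ p.2 ∧
        (∀ i, E i ((ρ * (swap 0 p.1 * swap p.1 p.2)) i)) ∧
        (ρ * (swap 0 p.1 * swap p.1 p.2)) 0 ≠ 0)).card := by
  have h := le_card_threeCycle_rematchings Δ (by simpa using hdegL 0) (by simpa using hdegR)
    hρ hρ0
  rw [Fintype.card_fin] at h
  calc (q - Δ - 1) * (q - 2 * Δ - 3) ≤ (q - Δ - 1) * (q - 2 * Δ - 2) :=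
        Nat.mul_le_mul_left _ (by omega)
    -- `h` decides its `∀` through `Fintype.decidableForallFintype`, the goal through
    -- `Nat.decidableForallFin`
    _ ≤ _ := by convert h

/-- Degree lower bound in the auxiliary graph on perfect matchings: given a perfect
matching `ρ` of `H` containing the edge `(1,1)` (here index `0 : Fin q`), there are at
least `(q − Δ − 1)(q − 2Δ − 3)` pairs `(i,j)` of distinct non-`1` indices such that
`ρ∘(1 i j)` is a perfect matching of `H` avoiding the edge `(1,1)`. -/
theorem stmt5 (q Δ : ℕ) [NeZero q] (hq : 2 * Δ + 4 ≤ q)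
    (E : Fin q → Fin q → Prop) [DecidableRel E]
    (hdegL : ∀ i, q - Δ ≤ (univ.filter (fun j => E i j)).card)
    (hdegR : ∀ j, q - Δ ≤ (univ.filter (fun i => E i j)).card)
    (h11 : E 0 0)
    (ρ : Perm (Fin q)) (hρ : ∀ i, E i (ρ i)) (hρ0 : ρ 0 = 0) :
    (q - Δ - 1) * (q - 2 * Δ - 3) ≤
      (univ.filter (fun p : Fin q × Fin q =>
        p.1 ≠ 0 ∧ p.2 ≠ 0 ∧ p.1 ≠ p.2 ∧
        (∀ i, E i ((ρ * (swap 0 p.1 * swap p.1 p.2)) i)) ∧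
        (ρ * (swap 0 p.1 * swap p.1 p.2)) 0 ≠ 0)).card :=
  stmt5_general q Δ E hdegL hdegR ρ hρ hρ0
end

section
/- Let q ≥ 2Δ + 3, and let H be a bipartite graph with balanced bipartition [q] ⊔ [q] and minimum degree at least q − Δ, containing the edge (1,1). Let 𝓛 be the set of perfect matchings of H containing (1,1) and 𝓡 the set of perfect matchings not containing (1,1). Then |𝓛| / (|𝓛| + |𝓡|) ≤ (q − 2) / ((q − 2) + (q − Δ − 1)(q − 2Δ − 3)). -/
/-!
Double count the switches `ρ ↦ ρ ∘ (o i j)` between matchings `ρ` through the edge `(o, o)` and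
matchings avoiding it. A switch of `ρ` is a matching as soon as `(j, o)`, `(o, ρ i)` and
`(i, ρ j)` are edges: there are at least `n - Δ - 1` choices of `j`, and for each of them at
least `n - 2Δ - 2` common choices of `i`. Conversely, a matching `ρ'` avoiding `(o, o)` forces
`j = ρ'⁻¹ o`, so it is reached by at most `n - 2` switches. Hence
`|𝓛| (n - Δ - 1)(n - 2Δ - 3) ≤ |𝓡| (n - 2)`, which rearranges to the ratio bound.
-/

open Equiv Finset
open scoped Classical

section ThreeCycle

variable {α : Type*} [DecidableEq α]

/-- The 3-cycle `o ↦ i ↦ j ↦ o`. -/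
def threeCycle (o i j : α) : Perm α :=
  swap o i * swap i j

variable {o i j : α}

lemma threeCycle_apply_base (hi : i ≠ o) (hj : j ≠ o) : threeCycle o i j o = i := by
  simp [threeCycle, swap_apply_of_ne_of_ne hi.symm hj.symm]

lemma threeCycle_apply_left (hj : j ≠ o) (hij : i ≠ j) : threeCycle o i j i = j := by
  simp [threeCycle, swap_apply_of_ne_of_ne hj hij.symm]

lemma threeCycle_apply_right (o i j : α) : threeCycle o i j j = o := by
  simp [threeCycle]

lemma threeCycle_apply_of_ne {k : α} (ho : k ≠ o) (hi : k ≠ i) (hj : k ≠ j) :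
    threeCycle o i j k = k := by
  simp [threeCycle, swap_apply_of_ne_of_ne hi hj, swap_apply_of_ne_of_ne ho hi]

lemma eq_and_eq_of_threeCycle_eq {i j i' j' : α} (hi : i ≠ o) (hj : j ≠ o) (hij : i ≠ j)
    (hi' : i' ≠ o) (hj' : j' ≠ o) (hij' : i' ≠ j')
    (h : threeCycle o i j = threeCycle o i' j') : i = i' ∧ j = j' := by
  have hi_eq : i = i' := by
    rw [← threeCycle_apply_base hi hj, h, threeCycle_apply_base hi' hj']
  refine ⟨hi_eq, ?_⟩
  rw [← threeCycle_apply_left hj hij, h, hi_eq, threeCycle_apply_left hj' hij']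

end ThreeCycle

lemma div_add_le_div_add {x y a b : ℝ} (hx : 0 ≤ x) (hy : 0 ≤ y) (ha : 0 < a) (hb : 0 ≤ b)
    (h : x * b ≤ y * a) : x / (x + y) ≤ a / (a + b) := by
  rcases (add_nonneg hx hy).eq_or_lt with hxy | hxy
  · rw [← hxy, div_zero]
    positivity
  · rw [div_le_div_iff₀ hxy (by positivity)]
    linarith

section Switching

variable {α : Type*} [Fintype α] [DecidableEq α]

/-- A perfect matching of the bipartite graph `E` on `α ⊔ α` is a permutation `ρ` with
`E i (ρ i)` for all `i`; these are the ones using the edge `(o, o)`. -/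
noncomputable def matchingsThrough (E : α → α → Prop) (o : α) : Finset (Perm α) :=
  univ.filter fun ρ => (∀ i, E i (ρ i)) ∧ ρ o = o

noncomputable def matchingsAvoiding (E : α → α → Prop) (o : α) : Finset (Perm α) :=
  univ.filter fun ρ => (∀ i, E i (ρ i)) ∧ ρ o ≠ o

def SwitchStep (o : α) (ρ ρ' : Perm α) : Prop :=
  ∃ i j, i ≠ o ∧ j ≠ o ∧ i ≠ j ∧ ρ' = ρ * threeCycle o i j

variable {E : α → α → Prop} {o : α}

lemma mul_threeCycle_mem_matchingsAvoiding {ρ : Perm α} (hρ : ρ ∈ matchingsThrough E o)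
    {i j : α} (hi : i ≠ o) (hj : j ≠ o) (hij : i ≠ j)
    (hoi : E o (ρ i)) (hij' : E i (ρ j)) (hjo : E j o) :
    ρ * threeCycle o i j ∈ matchingsAvoiding E o := by
  obtain ⟨hmatch, hρo⟩ := (mem_filter.mp hρ).2
  refine mem_filter.mpr ⟨mem_univ _, fun k => ?_, ?_⟩
  · rw [Perm.mul_apply]
    by_cases hko : k = o
    · subst hko; rwa [threeCycle_apply_base hi hj]
    by_cases hki : k = i
    · subst hki; rwa [threeCycle_apply_left hj hij]
    by_cases hkj : k = j
    · subst hkj; rwa [threeCycle_apply_right, hρo]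
    rw [threeCycle_apply_of_ne hko hki hkj]
    exact hmatch k
  · rw [Perm.mul_apply, threeCycle_apply_base hi hj, ← hρo]
    exact ρ.injective.ne hi

/-- The 3-cycle must send `ρ'⁻¹ o` to `o`, so only its middle point `i ∉ {o, ρ'⁻¹ o}` is
free. -/
lemma card_filter_switchStep_le {s : Finset (Perm α)} (hs : ∀ ρ ∈ s, ρ o = o)
    {ρ' : Perm α} (hρ' : ρ' o ≠ o) :
    #(s.filter fun ρ => SwitchStep o ρ ρ') ≤ Fintype.card α - 2 := by
  have hjo : ρ'.symm o ≠ o := fun h => hρ' (ρ'.symm_apply_eq.mp h).symm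
  calc #(s.filter fun ρ => SwitchStep o ρ ρ')
      ≤ #((univ \ {o, ρ'.symm o}).image fun i => ρ' * (threeCycle o i (ρ'.symm o))⁻¹) := by
        refine card_le_card fun ρ hρ => ?_
        obtain ⟨hρs, i, j, hi, hj, hij, hρρ'⟩ := mem_filter.mp hρ
        have hj' : ρ'.symm o = j := by
          rw [Equiv.symm_apply_eq, hρρ', Perm.mul_apply, threeCycle_apply_right, hs ρ hρs]
        refine mem_image.mpr ⟨i, ?_, ?_⟩
        · simp [hi, hj', hij]
        · rw [hj', hρρ', mul_inv_cancel_right]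
    _ ≤ #(univ \ {o, ρ'.symm o}) := card_image_le
    _ = Fintype.card α - 2 := by
        rw [card_sdiff_of_subset (subset_univ _), card_univ, card_pair hjo.symm]

lemma card_filter_add_card_filter_le (P Q : α → Prop) :
    #(univ.filter P) + #(univ.filter Q) ≤ #(univ.filter fun a => P a ∧ Q a) + Fintype.card α := by
  rw [filter_and, ← card_union_add_card_inter, add_comm]
  exact Nat.add_le_add_left (card_le_univ _) _

variable {Δ : ℕ}

lemma le_card_switch_middle (hdegL : ∀ i, Fintype.card α - Δ ≤ #(univ.filter fun j => E i j))
    (hdegR : ∀ j, Fintype.card α - Δ ≤ #(univ.filter fun i => E i j)) (ρ : Perm α) (j : α) :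
    Fintype.card α - 2 * Δ - 2 ≤
      #(univ.filter fun i => i ≠ o ∧ i ≠ j ∧ E o (ρ i) ∧ E i (ρ j)) := by
  have hA : #(univ.filter fun i => E o (ρ i)) = #(univ.filter fun i => E o i) :=
    card_equiv ρ (by simp)
  have hAB := card_filter_add_card_filter_le (fun i => E o (ρ i)) (fun i => E i (ρ j))
  have hsub : (univ.filter fun i => E o (ρ i) ∧ E i (ρ j)) \ {o, j} ⊆
      univ.filter fun i => i ≠ o ∧ i ≠ j ∧ E o (ρ i) ∧ E i (ρ j) := by
    intro i
    simp +contextual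
  have hsdiff := le_card_sdiff {o, j} (univ.filter fun i => E o (ρ i) ∧ E i (ρ j))
  have hI := card_le_card hsub
  have hdego := hdegL o
  have hdegρj := hdegR (ρ j)
  have hpair := card_le_two (a := o) (b := j)
  omega

lemma le_card_filter_switchStep
    (hdegL : ∀ i, Fintype.card α - Δ ≤ #(univ.filter fun j => E i j))
    (hdegR : ∀ j, Fintype.card α - Δ ≤ #(univ.filter fun i => E i j))
    {ρ : Perm α} (hρ : ρ ∈ matchingsThrough E o) :
    (Fintype.card α - Δ - 1) * (Fintype.card α - 2 * Δ - 2) ≤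
      #((matchingsAvoiding E o).filter (SwitchStep o ρ)) := by
  set J := (univ.filter fun j => E j o).erase o
  set I := fun j => univ.filter fun i => i ≠ o ∧ i ≠ j ∧ E o (ρ i) ∧ E i (ρ j)
  have hJ : Fintype.card α - Δ - 1 ≤ #J :=
    (Nat.sub_le_sub_right (hdegR o) 1).trans pred_card_le_card_erase
  calc (Fintype.card α - Δ - 1) * (Fintype.card α - 2 * Δ - 2)
      ≤ #J * (Fintype.card α - 2 * Δ - 2) := Nat.mul_le_mul_right _ hJ
    _ = ∑ _j ∈ J, (Fintype.card α - 2 * Δ - 2) := by rw [sum_const, smul_eq_mul]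
    _ ≤ ∑ j ∈ J, #(I j) := sum_le_sum fun j _ => le_card_switch_middle hdegL hdegR ρ j
    _ = #(J.sigma I) := (card_sigma _ _).symm
    _ ≤ #((matchingsAvoiding E o).filter (SwitchStep o ρ)) := by
      refine card_le_card_of_injOn (fun p => ρ * threeCycle o p.2 p.1) ?_ ?_
      · intro ⟨j, i⟩ hp
        obtain ⟨hjJ, hiI⟩ := mem_sigma.mp hp
        obtain ⟨hj, hjo⟩ := mem_erase.mp hjJ
        obtain ⟨hi, hij, hoi, hij'⟩ := (mem_filter.mp hiI).2
        refine mem_filter.mpr ⟨?_, i, j, hi, hj, hij, rfl⟩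
        exact mul_threeCycle_mem_matchingsAvoiding hρ hi hj hij hoi hij' (mem_filter.mp hjo).2
      · intro ⟨j, i⟩ hp ⟨j', i'⟩ hp' h
        obtain ⟨hjJ, hiI⟩ := mem_sigma.mp hp
        obtain ⟨hjJ', hiI'⟩ := mem_sigma.mp hp'
        obtain ⟨hi, hij, -⟩ := (mem_filter.mp hiI).2
        obtain ⟨hi', hij', -⟩ := (mem_filter.mp hiI').2
        obtain ⟨rfl, rfl⟩ := eq_and_eq_of_threeCycle_eq hi (ne_of_mem_erase hjJ) hij hi'
          (ne_of_mem_erase hjJ') hij' (mul_left_cancel h)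
        rfl

theorem card_mul_le_card_mul_matchings
    (hdegL : ∀ i, Fintype.card α - Δ ≤ #(univ.filter fun j => E i j))
    (hdegR : ∀ j, Fintype.card α - Δ ≤ #(univ.filter fun i => E i j)) :
    #(matchingsThrough E o) * ((Fintype.card α - Δ - 1) * (Fintype.card α - 2 * Δ - 2)) ≤
      #(matchingsAvoiding E o) * (Fintype.card α - 2) :=
  card_mul_le_card_mul (SwitchStep o) (fun _ hρ => le_card_filter_switchStep hdegL hdegR hρ)
    fun _ hρ' => card_filter_switchStep_le (fun _ hρ => (mem_filter.mp hρ).2.2)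
      (mem_filter.mp hρ').2.2

theorem card_matchingsThrough_div_le (hn : 2 * Δ + 3 ≤ Fintype.card α)
    (hdegL : ∀ i, Fintype.card α - Δ ≤ #(univ.filter fun j => E i j))
    (hdegR : ∀ j, Fintype.card α - Δ ≤ #(univ.filter fun i => E i j)) :
    (#(matchingsThrough E o) : ℝ) / (#(matchingsThrough E o) + #(matchingsAvoiding E o)) ≤
      ((Fintype.card α : ℝ) - 2) / (((Fintype.card α : ℝ) - 2) +
        ((Fintype.card α : ℝ) - Δ - 1) * ((Fintype.card α : ℝ) - 2 * Δ - 3)) := by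
  set n := Fintype.card α
  have hcount : #(matchingsThrough E o) * ((n - Δ - 1) * (n - 2 * Δ - 3)) ≤
      #(matchingsAvoiding E o) * (n - 2) :=
    le_trans (Nat.mul_le_mul_left _ (Nat.mul_le_mul_left _ (by omega)))
      (card_mul_le_card_mul_matchings hdegL hdegR)
  have hn' : (2 * Δ + 3 : ℝ) ≤ n := by exact_mod_cast hn
  rw [← Nat.cast_le (α := ℝ)] at hcount
  push_cast [Nat.cast_sub (by omega : 1 ≤ n - Δ), Nat.cast_sub (by omega : Δ ≤ n),
    Nat.cast_sub (by omega : 3 ≤ n - 2 * Δ), Nat.cast_sub (by omega : 2 * Δ ≤ n),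
    Nat.cast_sub (by omega : 2 ≤ n)] at hcount
  exact div_add_le_div_add (by positivity) (by positivity) (by linarith)
    (mul_nonneg (by linarith) (by linarith)) hcount

end Switching

theorem stmt8_general (q Δ : ℕ) [NeZero q] (hq : 2 * Δ + 3 ≤ q)
    (E : Fin q → Fin q → Prop)
    (hdegL : ∀ i, q - Δ ≤ (univ.filter (fun j => E i j)).card)
    (hdegR : ∀ j, q - Δ ≤ (univ.filter (fun i => E i j)).card) :
    ((univ.filter (fun ρ : Perm (Fin q) => (∀ i, E i (ρ i)) ∧ ρ 0 = 0)).card : ℝ) /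
      (((univ.filter (fun ρ : Perm (Fin q) => (∀ i, E i (ρ i)) ∧ ρ 0 = 0)).card : ℝ) +
        ((univ.filter (fun ρ : Perm (Fin q) => (∀ i, E i (ρ i)) ∧ ρ 0 ≠ 0)).card : ℝ)) ≤
      ((q : ℝ) - 2) / (((q : ℝ) - 2) + ((q : ℝ) - Δ - 1) * ((q : ℝ) - 2 * Δ - 3)) := by
  have h := card_matchingsThrough_div_le (o := (0 : Fin q)) (by simpa using hq)
    (by simpa using hdegL) (by simpa using hdegR)
  unfold matchingsThrough matchingsAvoiding at h
  simp only [Fintype.card_fin] at h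
  -- the two sides decide `∀ i : Fin q, _` by different (propositionally equal) instances
  convert h

/-- Ratio bound: for a bipartite graph on `[q] ⊔ [q]` of minimum degree `≥ q − Δ`
containing the edge `(1,1)` (index `0`), the proportion of perfect matchings using that
edge is at most `(q−2) / ((q−2) + (q−Δ−1)(q−2Δ−3))`. -/
theorem stmt8 (q Δ : ℕ) [NeZero q] (hq : 2 * Δ + 3 ≤ q)
    (E : Fin q → Fin q → Prop)
    (hdegL : ∀ i, q - Δ ≤ (univ.filter (fun j => E i j)).card)
    (hdegR : ∀ j, q - Δ ≤ (univ.filter (fun i => E i j)).card)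
    (h11 : E 0 0) :
    ((univ.filter (fun ρ : Perm (Fin q) => (∀ i, E i (ρ i)) ∧ ρ 0 = 0)).card : ℝ) /
      (((univ.filter (fun ρ : Perm (Fin q) => (∀ i, E i (ρ i)) ∧ ρ 0 = 0)).card : ℝ) +
        ((univ.filter (fun ρ : Perm (Fin q) => (∀ i, E i (ρ i)) ∧ ρ 0 ≠ 0)).card : ℝ)) ≤
      ((q : ℝ) - 2) / (((q : ℝ) - 2) + ((q : ℝ) - Δ - 1) * ((q : ℝ) - 2 * Δ - 3)) :=
  stmt8_general q Δ hq E hdegL hdegR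
end

section
/- Let G be a graph of maximum degree Δ, L a q-list assignment with q ≥ 2Δ + 2, ω an L-packing, u a vertex, and (a,b) ∈ [q] × [q]. Then the availability graph H_u of u in ω, with the edge (a,b) deleted if present, still contains a perfect matching. Consequently there exists a permutation ρ ∈ S_q that is available for u in ω and satisfies ρ(a) ≠ b. -/
open Equiv Finset

/-- `ω : V → Perm (Fin q)` is an `L`-packing of `G`. -/
def IsPacking {V : Type*} {q : ℕ} (G : SimpleGraph V) (L : V → Fin q → ℕ)
    (ω : V → Perm (Fin q)) : Prop :=
  ∀ i : Fin q, ∀ v w : V, G.Adj v w → L v (ω v i) ≠ L w (ω w i)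

/-- Edge `(i,j)` of the availability graph `H_u` of `u` in `ω`. -/
def availEdge {V : Type*} {q : ℕ} (G : SimpleGraph V) (L : V → Fin q → ℕ)
    (ω : V → Perm (Fin q)) (u : V) (i j : Fin q) : Prop :=
  ∀ w : V, G.Adj u w → L u j ≠ L w (ω w i)

/-!
A neighbour `w` of `u` makes at most one entry of each row `i` of `H_u` a non-edge (as `L u` is
injective) and at most one entry of each column `j` (as `L w ∘ ω w` is injective), so every row
and column misses at most `Δ` entries, and at most `Δ + 1` once `(a, b)` is deleted. Since
`2 (Δ + 1) ≤ q`, Hall's condition holds: a set of at most `q - (Δ + 1)` rows is covered by the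
neighbourhood of any one of its rows, and a larger set meets the neighbourhood of every column.
-/

theorem Equiv.Perm.exists_forall_rel_of_card_not_rel_le {α : Type*} [Fintype α]
    (r : α → α → Prop) [DecidableRel r] {d : ℕ}
    (hrow : ∀ i, #{j | ¬ r i j} ≤ d) (hcol : ∀ j, #{i | ¬ r i j} ≤ d)
    (hcard : 2 * d ≤ Fintype.card α) : ∃ σ : Perm α, ∀ i, r i (σ i) := by
  obtain ⟨f, hf, hr⟩ := (Fintype.all_card_le_filter_rel_iff_exists_injective r).1 fun A => by
    by_cases hA : #A ≤ Fintype.card α - d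
    · obtain rfl | ⟨i, hi⟩ := A.eq_empty_or_nonempty
      · simp
      have hdeg : Fintype.card α - d ≤ #{j | r i j} := by
        have := card_filter_add_card_filter_not (s := univ) (fun j => r i j)
        have := hrow i
        rw [card_univ] at *
        omega
      calc #A ≤ #{j | r i j} := hA.trans hdeg
        _ ≤ #{b | ∃ a ∈ A, r a b} := card_le_card fun j hj => by
          simp only [mem_filter, mem_univ, true_and] at hj ⊢
          exact ⟨i, hi, hj⟩
    · have hcover : ∀ j, ∃ a ∈ A, r a j := fun j => by
        by_contra! h
        have : #A ≤ d := (card_le_card fun i hi => by simpa using h i hi).trans (hcol j)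
        omega
      calc #A ≤ Fintype.card α := card_le_univ A
        _ = #{b | ∃ a ∈ A, r a b} := by rw [filter_true_of_mem fun j _ => hcover j, card_univ]
  exact ⟨Equiv.ofBijective f hf.bijective_of_finite, hr⟩

theorem Equiv.Perm.exists_forall_rel_apply_ne_of_card_not_rel_le {α : Type*} [Fintype α]
    (r : α → α → Prop) [DecidableRel r] {d : ℕ}
    (hrow : ∀ i, #{j | ¬ r i j} ≤ d) (hcol : ∀ j, #{i | ¬ r i j} ≤ d)
    (hcard : 2 * d + 2 ≤ Fintype.card α) (a b : α) :
    ∃ σ : Perm α, (∀ i, r i (σ i)) ∧ σ a ≠ b := by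
  classical
  obtain ⟨σ, hσ⟩ := exists_forall_rel_of_card_not_rel_le
    (fun i j => r i j ∧ ¬(i = a ∧ j = b)) (d := d + 1)
    (fun i => calc
      _ ≤ #(insert b ({j | ¬ r i j} : Finset α)) := card_le_card fun j => by
        simp only [not_and, Classical.not_imp, Decidable.not_not, mem_filter, mem_univ, true_and,
          mem_insert]
        tauto
      _ ≤ d + 1 := (card_insert_le _ _).trans (Nat.add_le_add_right (hrow i) 1))
    (fun j => calc
      _ ≤ #(insert a ({i | ¬ r i j} : Finset α)) := card_le_card fun i => by
        simp only [not_and, Classical.not_imp, Decidable.not_not, mem_filter, mem_univ, true_and,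
          mem_insert]
        tauto
      _ ≤ d + 1 := (card_insert_le _ _).trans (Nat.add_le_add_right (hcol j) 1))
    (by omega)
  exact ⟨σ, fun i => (hσ i).1, fun h => (hσ a).2 ⟨rfl, h⟩⟩

section Availability

variable {V : Type*} [Fintype V] {q : ℕ} (G : SimpleGraph V) (L : V → Fin q → ℕ)
  (ω : V → Perm (Fin q)) (u : V)

open scoped Classical in
theorem card_not_availEdge_row_le (hL : Function.Injective (L u)) (i : Fin q) :
    #{j | ¬ availEdge G L ω u i j} ≤ #{w | G.Adj u w} :=
  card_le_card_of_forall_subsingleton (fun j w => G.Adj u w ∧ L u j = L w (ω w i))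
    (fun j hj => by simpa [availEdge] using hj)
    (fun _ _ _ hj _ hj' => hL (hj.2.2.trans hj'.2.2.symm))

open scoped Classical in
theorem card_not_availEdge_col_le (hL : ∀ v, Function.Injective (L v)) (j : Fin q) :
    #{i | ¬ availEdge G L ω u i j} ≤ #{w | G.Adj u w} :=
  card_le_card_of_forall_subsingleton (fun i w => G.Adj u w ∧ L u j = L w (ω w i))
    (fun i hi => by simpa [availEdge] using hi)
    (fun w _ _ hi _ hi' => (ω w).injective (hL w (hi.2.2.symm.trans hi'.2.2)))

end Availability

theorem IsPacking.update_of_forall_availEdge {V : Type*} [DecidableEq V] {q : ℕ}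
    {G : SimpleGraph V} {L : V → Fin q → ℕ} {ω : V → Perm (Fin q)} (hω : IsPacking G L ω)
    {u : V} {ρ : Perm (Fin q)} (hρ : ∀ i, availEdge G L ω u i (ρ i)) :
    IsPacking G L (Function.update ω u ρ) := by
  intro i v w hvw
  obtain rfl | hv := eq_or_ne v u
  · simpa [Function.update_of_ne (G.ne_of_adj hvw).symm] using hρ i w hvw
  obtain rfl | hw := eq_or_ne w u
  · simpa [Function.update_of_ne hv] using (hρ i v hvw.symm).symm
  · simpa [Function.update_of_ne hv, Function.update_of_ne hw] using hω i v w hvw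

open scoped Classical in
/-- For `q ≥ 2Δ + 2`, the availability graph `H_u` minus any single (potential) edge
`(a,b)` still has a perfect matching; consequently there is an available permutation
`ρ` for `u` (i.e., updating `ω` at `u` to `ρ` yields a valid `L`-packing) with
`ρ a ≠ b`. -/
theorem stmt10 {V : Type*} [Fintype V] [DecidableEq V] {q Δ : ℕ} (G : SimpleGraph V)
    (L : V → Fin q → ℕ) (hLinj : ∀ v, Function.Injective (L v))
    (hΔ : ∀ v : V, (univ.filter (fun w => G.Adj v w)).card ≤ Δ)
    (hq : 2 * Δ + 2 ≤ q)
    (ω : V → Perm (Fin q)) (hω : IsPacking G L ω) (u : V) (a b : Fin q) :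
    ∃ ρ : Perm (Fin q),
      (∀ i, availEdge G L ω u i (ρ i)) ∧ ρ a ≠ b ∧
      IsPacking G L (Function.update ω u ρ) := by
  obtain ⟨ρ, hρ, hρab⟩ := Perm.exists_forall_rel_apply_ne_of_card_not_rel_le
    (availEdge G L ω u) (d := Δ)
    (fun i => (card_not_availEdge_row_le G L ω u (hLinj u) i).trans (hΔ u))
    (fun j => (card_not_availEdge_col_le G L ω u hLinj j).trans (hΔ u))
    (by simpa using hq) a b
  exact ⟨ρ, hρ, hρab, hω.update_of_forall_availEdge hρ⟩
end

section
/- For q ≥ 2Δ + 2, the heat-bath Glauber dynamics on the set Ω of L-packings of a graph G of maximum degree Δ is irreducible: any two L-packings are connected by a sequence of transitions each changing the permutation at a single vertex to another available permutation. Moreover any two packings are connected by a path of at most (Δ+1)·n such single-vertex updates, where n = |V(G)|. -/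
/-!
Move the vertices to their target permutations one at a time. Before `u` is set to `ω'_u`,
each neighbour `x` of `u` that has not reached its target yet is recoloured by a permutation
whose colour in every row `i` avoids the colours of `x`'s neighbours and the colour of `ω'_u`
in row `i`. In the resulting `q × q` matrix of forbidden entries every row and every column has
at most `Δ + 1` entries, so for `q ≥ 2Δ + 2` Hall's theorem yields such a permutation. After
that `ω'_u` is available at `u`, since the remaining neighbours already carry their targets.
Every vertex costs at most `Δ + 1` updates.
-/

open Equiv Finset

open Function SimpleGraph

theorem exists_perm_forall_not_of_card_filter_le {α : Type*} [Fintype α] [DecidableEq α]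
    (bad : α → α → Prop) [DecidableRel bad] {d : ℕ} (hd : 2 * d ≤ Fintype.card α)
    (hrow : ∀ i, #{c | bad i c} ≤ d) (hcol : ∀ c, #{i | bad i c} ≤ d) :
    ∃ ρ : Perm α, ∀ i, ¬ bad i (ρ i) := by
  have hall : ∀ s : Finset α, #s ≤ #(s.biUnion fun i => {c | ¬ bad i c}) := by
    intro s
    rcases s.eq_empty_or_nonempty with rfl | ⟨i, hi⟩
    · simp
    -- A small `s` is matched into the good entries of a single row; for a large `s` no column
    -- is bad in all rows of `s`.
    by_cases hs : #s + d ≤ Fintype.card α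
    · have hgood : #(univ : Finset α) ≤ #{c | ¬ bad i c} + d := by
        rw [← card_filter_add_card_filter_not (s := univ) (fun c => bad i c)]
        have := hrow i
        omega
      calc #s ≤ #{c | ¬ bad i c} := by rw [card_univ] at hgood; omega
        _ ≤ _ := card_le_card (subset_biUnion_of_mem (fun i => {c | ¬ bad i c}) hi)
    · suffices h : s.biUnion (fun i => {c | ¬ bad i c}) = univ by
        rw [h]; exact card_le_univ s
      refine eq_univ_of_forall fun c => by_contra fun hc => ?_
      have hsub : s ⊆ ({i | bad i c} : Finset α) := fun j hj => by
        simp only [mem_biUnion, mem_filter, mem_univ, true_and, not_exists, not_and,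
          not_not] at hc
        simpa using hc j hj
      have := card_le_card hsub
      have := hcol c
      omega
  obtain ⟨f, hf, hfc⟩ := (all_card_le_biUnion_card_iff_exists_injective _).1 hall
  exact ⟨Equiv.ofBijective f hf.bijective_of_finite, fun i => by simpa using hfc i⟩

theorem exists_perm_forall_ne_of_injective {α β : Type*} [Fintype α] [DecidableEq α]
    [DecidableEq β] {ℓ : α → β} (hℓ : Injective ℓ) (S : Finset (α → β))
    (hS : ∀ f ∈ S, Injective f) (hcard : 2 * #S ≤ Fintype.card α) :
    ∃ ρ : Perm α, ∀ i, ∀ f ∈ S, ℓ (ρ i) ≠ f i := by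
  have hrow : ∀ i, #{c | ∃ f ∈ S, ℓ c = f i} ≤ #S := fun i =>
    calc #{c | ∃ f ∈ S, ℓ c = f i} = #(image ℓ {c | ∃ f ∈ S, ℓ c = f i}) :=
          (card_image_of_injective _ hℓ).symm
      _ ≤ #(S.image (· i)) := card_le_card <| by
          intro b
          simp only [mem_image, mem_filter, mem_univ, true_and]
          rintro ⟨c, ⟨f, hf, hc⟩, rfl⟩
          exact ⟨f, hf, hc.symm⟩
      _ ≤ #S := card_image_le
  have hcol : ∀ c, #{i | ∃ f ∈ S, ℓ c = f i} ≤ #S := fun c =>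
    calc #{i | ∃ f ∈ S, ℓ c = f i} ≤ #(S.biUnion fun f => {i | f i = ℓ c}) := card_le_card <| by
          intro i
          simp only [mem_biUnion, mem_filter, mem_univ, true_and]
          rintro ⟨f, hf, hc⟩
          exact ⟨f, hf, hc.symm⟩
      _ ≤ ∑ f ∈ S, #{i | f i = ℓ c} := card_biUnion_le
      _ ≤ ∑ _f ∈ S, 1 := sum_le_sum fun f hf => card_le_one.2 fun a ha b hb =>
          hS f hf <| by simp only [mem_filter] at ha hb; rw [ha.2, hb.2]
      _ = #S := by simp
  obtain ⟨ρ, hρ⟩ := exists_perm_forall_not_of_card_filter_le _ hcard hrow hcol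
  exact ⟨ρ, fun i f hf h => hρ i ⟨f, hf, h⟩⟩

section Glauber

variable {V : Type*} {q : ℕ} {G : SimpleGraph V} {L : V → Fin q → ℕ}

theorem IsPacking.update [DecidableEq V] {σ : V → Perm (Fin q)} (hσ : IsPacking G L σ) {u : V}
    {ρ : Perm (Fin q)} (hρ : ∀ i x, G.Adj u x → L u (ρ i) ≠ L x (σ x i)) :
    IsPacking G L (update σ u ρ) := by
  intro i v w hvw
  rcases eq_or_ne v u with rfl | hv
  · rw [update_self, update_of_ne (G.ne_of_adj hvw).symm]
    exact hρ i w hvw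
  rcases eq_or_ne w u with rfl | hw
  · rw [update_self, update_of_ne hv]
    exact (hρ i v hvw.symm).symm
  rw [update_of_ne hv, update_of_ne hw]
  exact hσ i v w hvw

variable (G L) in
abbrev Packing := {ω : V → Perm (Fin q) // IsPacking G L ω}

variable (G L) in
/-- The transition graph of the Glauber dynamics: distinct packings that differ at a single
vertex. -/
def glauberGraph : SimpleGraph (Packing G L) :=
  fromRel fun σ τ => ∃ u, ∀ v, v ≠ u → σ.1 v = τ.1 v

theorem glauberGraph.exists_walk_update [DecidableEq V] (σ : Packing G L) (u : V)
    (ρ : Perm (Fin q)) (h : IsPacking G L (update σ.1 u ρ)) :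
    ∃ w : (glauberGraph G L).Walk σ ⟨_, h⟩, w.length ≤ 1 := by
  by_cases heq : σ = ⟨_, h⟩
  · exact ⟨Walk.nil.copy rfl heq, by simp⟩
  · have hadj : (glauberGraph G L).Adj σ ⟨_, h⟩ :=
      ⟨heq, Or.inl ⟨u, fun v hv => (update_of_ne hv _ _).symm⟩⟩
    exact ⟨hadj.toWalk, by simp⟩

variable [Fintype V] [DecidableRel G.Adj] {Δ : ℕ}

theorem exists_perm_avoiding_neighbors (hq : 2 * Δ + 2 ≤ q) (hL : ∀ v, Injective (L v))
    (hΔ : ∀ v, #{w | G.Adj v w} ≤ Δ) (σ : V → Perm (Fin q)) (u : V) {g : Fin q → ℕ}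
    (hg : Injective g) :
    ∃ ρ : Perm (Fin q), (∀ i x, G.Adj u x → L u (ρ i) ≠ L x (σ x i)) ∧ ∀ i, L u (ρ i) ≠ g i := by
  set S : Finset (Fin q → ℕ) := insert g (({x | G.Adj u x} : Finset V).image fun x => L x ∘ σ x)
  have hS : ∀ f ∈ S, Injective f := by
    simp only [S, mem_insert, mem_image]
    rintro f (rfl | ⟨x, -, rfl⟩)
    exacts [hg, (hL x).comp (σ x).injective]
  have hcard : 2 * #S ≤ Fintype.card (Fin q) := by
    have : #S ≤ Δ + 1 := (card_insert_le _ _).trans (by gcongr; exact card_image_le.trans (hΔ u))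
    rw [Fintype.card_fin]
    omega
  obtain ⟨ρ, hρ⟩ := exists_perm_forall_ne_of_injective (hL u) S hS hcard
  refine ⟨ρ, fun i x hx => hρ i (L x ∘ σ x) ?_, fun i => hρ i g (mem_insert_self _ _)⟩
  exact mem_insert_of_mem (mem_image.2 ⟨x, by simpa using hx, rfl⟩)

theorem glauberGraph.exists_walk_recolor_avoiding [DecidableEq V] (hq : 2 * Δ + 2 ≤ q)
    (hL : ∀ v, Injective (L v)) (hΔ : ∀ v, #{w | G.Adj v w} ≤ Δ) {g : Fin q → ℕ}
    (hg : Injective g) (σ : Packing G L) (T : Finset V) :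
    ∃ (σ' : Packing G L) (w : (glauberGraph G L).Walk σ σ'), w.length ≤ #T ∧
      (∀ v ∉ T, σ'.1 v = σ.1 v) ∧ ∀ v ∈ T, ∀ i, L v (σ'.1 v i) ≠ g i := by
  induction T using Finset.induction_on with
  | empty => exact ⟨σ, .nil, le_rfl, fun _ _ => rfl, by simp⟩
  | @insert u T hu ih =>
    obtain ⟨σ', w, hw, hoff, hT⟩ := ih
    obtain ⟨ρ, hρσ', hρg⟩ := exists_perm_avoiding_neighbors hq hL hΔ σ'.1 u hg
    obtain ⟨w', hw'⟩ := exists_walk_update σ' u ρ (σ'.2.update hρσ')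
    refine ⟨_, w.append w', ?_, fun v hv => ?_, fun v hv i => ?_⟩
    · rw [Walk.length_append, card_insert_of_notMem hu]
      omega
    · rw [mem_insert, not_or] at hv
      dsimp only
      rw [update_of_ne hv.1]
      exact hoff v hv.2
    · dsimp only
      rcases eq_or_ne v u with rfl | hvu
      · rw [update_self]
        exact hρg i
      · rw [update_of_ne hvu]
        exact hT v ((mem_insert.1 hv).resolve_left hvu) i

theorem glauberGraph.exists_walk_of_forall_notMem_eq [DecidableEq V] (hq : 2 * Δ + 2 ≤ q)
    (hL : ∀ v, Injective (L v)) (hΔ : ∀ v, #{w | G.Adj v w} ≤ Δ) (τ : Packing G L)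
    (s : Finset V) (σ : Packing G L) (hσ : ∀ v ∉ s, σ.1 v = τ.1 v) :
    ∃ w : (glauberGraph G L).Walk σ τ, w.length ≤ (Δ + 1) * #s := by
  induction s using Finset.induction_on generalizing σ with
  | empty =>
    exact ⟨Walk.nil.copy rfl (Subtype.ext (funext fun v => hσ v (notMem_empty v))), by simp⟩
  | @insert u s hu ih =>
    set T : Finset V := {x ∈ s | G.Adj u x}
    have hT : #T ≤ Δ := (card_le_card fun x hx => by simp_all [T]).trans (hΔ u)
    obtain ⟨σ', w₁, hw₁, hoff, hσ'⟩ :=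
      exists_walk_recolor_avoiding hq hL hΔ ((hL u).comp (τ.1 u).injective) σ T
    have hρ : ∀ i x, G.Adj u x → L u (τ.1 u i) ≠ L x (σ'.1 x i) := by
      intro i x hx
      by_cases hxs : x ∈ s
      · exact (hσ' x (by simp [T, hxs, hx]) i).symm
      · have hxT : x ∉ T := by simp [T, hxs]
        rw [hoff x hxT, hσ x (by simp [hxs, (G.ne_of_adj hx).symm])]
        exact τ.2 i u x hx
    obtain ⟨w₂, hw₂⟩ := exists_walk_update σ' u (τ.1 u) (σ'.2.update hρ)
    obtain ⟨w₃, hw₃⟩ := ih ⟨_, σ'.2.update hρ⟩ fun v hv => by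
      rcases eq_or_ne v u with rfl | hvu
      · exact update_self ..
      · dsimp only
        rw [update_of_ne hvu, hoff v (by simp [T, hv]), hσ v (by simp [hv, hvu])]
    refine ⟨w₁.append (w₂.append w₃), ?_⟩
    rw [Walk.length_append, Walk.length_append, card_insert_of_notMem hu, mul_add_one]
    omega

end Glauber

open scoped Classical in
/-- Irreducibility of the Glauber dynamics on `L`-packings for `q ≥ 2Δ + 2`: any two
`L`-packings are connected by a path of at most `(Δ+1)·n` single-vertex updates, each
intermediate state being a valid `L`-packing. -/
theorem stmt11 {V : Type*} [Fintype V] {q Δ : ℕ} (G : SimpleGraph V)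
    (L : V → Fin q → ℕ) (hLinj : ∀ v, Function.Injective (L v))
    (hΔ : ∀ v : V, (univ.filter (fun w => G.Adj v w)).card ≤ Δ)
    (hq : 2 * Δ + 2 ≤ q)
    (ω ω' : V → Perm (Fin q)) (hω : IsPacking G L ω) (hω' : IsPacking G L ω') :
    ∃ (m : ℕ) (path : ℕ → V → Perm (Fin q)),
      m ≤ (Δ + 1) * Fintype.card V ∧
      path 0 = ω ∧ path m = ω' ∧
      (∀ k ≤ m, IsPacking G L (path k)) ∧
      (∀ k < m, ∃ u : V, ∀ v : V, v ≠ u → path k v = path (k + 1) v) := by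
  obtain ⟨w, hw⟩ := glauberGraph.exists_walk_of_forall_notMem_eq hq hLinj hΔ ⟨ω', hω'⟩ univ
    ⟨ω, hω⟩ (by simp)
  refine ⟨w.length, fun k => (w.getVert k).1, by simpa using hw, by simp, by simp,
    fun k _ => (w.getVert k).2, fun k hk => ?_⟩
  obtain ⟨-, ⟨u, hu⟩ | ⟨u, hu⟩⟩ := w.adj_getVert_succ hk
  · exact ⟨u, hu⟩
  · exact ⟨u, fun v hv => (hu v hv).symm⟩
end

section
/- Let M be an ergodic Markov chain on finite state space Ω and let Γ be a weighted directed graph on Ω with edge weights in ℕ, inducing shortest-path quasi-metric δ with δ(ω,ω') ≤ D < ∞ for all ω, ω'. Suppose for each edge (ω,ω') of Γ there is a coupling γ of the one-step distributions Pω and Pω' with E_{(σ,σ')∼γ}[δ(σ,σ')] ≤ β·δ(ω,ω') for some β < 1. Then t_mix(ε) ≤ log(D/ε)/(1−β). -/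
/-!
Along a shortest path from `x` to `y`, the edge couplings glue (conditioning on the shared
middle marginal) into a coupling of `P x` and `P y`; the triangle inequality for `δ` makes the
expected distances add, so this coupling has expected distance at most `β δ(x, y)`. Composing
such couplings step by step couples `Pᵗ x` with `Pᵗ y` at expected distance `≤ βᵗ δ(x, y) ≤ βᵗ D`,
which bounds their total variation distance because `δ ≥ 1` off the diagonal. Averaging over the
initial and the stationary distribution and using `β ≤ exp (β - 1)` gives the bound. For `β < 0`
the contraction forces `δ ≡ 0`, so the chain lives on a single point.
-/

open Finset

noncomputable def pathDist {Ω : Type*} (E : Ω → Ω → Prop) (w : Ω → Ω → ℕ) (x y : Ω) : ℕ :=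
  sInf {s | ∃ (m : ℕ) (p : ℕ → Ω), p 0 = x ∧ p m = y ∧
    (∀ k < m, E (p k) (p (k + 1))) ∧
    s = ∑ k ∈ Finset.range m, w (p k) (p (k + 1))}

section

open Matrix

variable {Ω : Type*}

section PathDist

variable (E : Ω → Ω → Prop) (w : Ω → Ω → ℕ)

-- When this set is empty, `pathDist E w x y` takes the junk value `sInf ∅ = 0`.
def pathWeights (x y : Ω) : Set ℕ :=
  {s | ∃ (m : ℕ) (p : ℕ → Ω), p 0 = x ∧ p m = y ∧
    (∀ k < m, E (p k) (p (k + 1))) ∧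
    s = ∑ k ∈ Finset.range m, w (p k) (p (k + 1))}

lemma pathDist_eq_sInf (x y : Ω) : pathDist E w x y = sInf (pathWeights E w x y) := rfl

lemma zero_mem_pathWeights (x : Ω) : 0 ∈ pathWeights E w x x :=
  ⟨0, fun _ => x, rfl, rfl, by simp, by simp⟩

lemma pathDist_self (x : Ω) : pathDist E w x x = 0 :=
  Nat.eq_zero_of_le_zero (Nat.sInf_le (zero_mem_pathWeights E w x))

variable {E w}

lemma add_mem_pathWeights_of_edge {x y z : Ω} {s : ℕ} (hE : E x y)
    (hs : s ∈ pathWeights E w y z) : w x y + s ∈ pathWeights E w x z := by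
  obtain ⟨m, p, rfl, rfl, hpE, rfl⟩ := hs
  refine ⟨m + 1, fun k => if k = 0 then x else p (k - 1), by simp, by simp, ?_, ?_⟩
  · rintro (_ | k) hk
    · simpa using hE
    · simpa using hpE k (by omega)
  · simp [sum_range_succ', add_comm]

lemma add_mem_pathWeights {x y z : Ω} {s t : ℕ} (hs : s ∈ pathWeights E w x y)
    (ht : t ∈ pathWeights E w y z) : s + t ∈ pathWeights E w x z := by
  obtain ⟨m, p, rfl, rfl, hpE, rfl⟩ := hs
  induction m generalizing p with
  | zero => simpa using ht
  | succ m ih =>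
    rw [sum_range_succ', add_comm _ (w _ _), add_assoc]
    exact add_mem_pathWeights_of_edge (hpE 0 m.succ_pos)
      (ih (fun k => p (k + 1)) ht fun k hk => hpE (k + 1) (by omega))

lemma pathDist_le_of_edge {x y : Ω} (hE : E x y) : pathDist E w x y ≤ w x y :=
  Nat.sInf_le (add_mem_pathWeights_of_edge hE (zero_mem_pathWeights E w y))

lemma pathWeights_nonempty (hδ : ∀ x y, pathDist E w x y = 0 → x = y) (x y : Ω) :
    (pathWeights E w x y).Nonempty := by
  by_cases hxy : x = y
  · exact hxy ▸ ⟨0, zero_mem_pathWeights E w x⟩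
  · refine Set.nonempty_iff_ne_empty.2 fun h => hxy (hδ x y ?_)
    rw [pathDist_eq_sInf, h, Nat.sInf_empty]

lemma pathDist_triangle (hreach : ∀ x y, (pathWeights E w x y).Nonempty) (x y z : Ω) :
    pathDist E w x z ≤ pathDist E w x y + pathDist E w y z :=
  Nat.sInf_le (add_mem_pathWeights (Nat.sInf_mem (hreach x y)) (Nat.sInf_mem (hreach y z)))

lemma pathDist_le_sum_pathDist (hreach : ∀ x y, (pathWeights E w x y).Nonempty)
    (p : ℕ → Ω) (m : ℕ) :
    pathDist E w (p 0) (p m) ≤ ∑ k ∈ range m, pathDist E w (p k) (p (k + 1)) := by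
  induction m with
  | zero => simp [pathDist_self]
  | succ m ih =>
    rw [sum_range_succ]
    exact (pathDist_triangle hreach _ (p m) _).trans (by gcongr)

lemma exists_geodesic (hreach : ∀ x y, (pathWeights E w x y).Nonempty) (x y : Ω) :
    ∃ (m : ℕ) (p : ℕ → Ω), p 0 = x ∧ p m = y ∧ (∀ k < m, E (p k) (p (k + 1))) ∧
      ∑ k ∈ range m, pathDist E w (p k) (p (k + 1)) = pathDist E w x y := by
  obtain ⟨m, p, rfl, rfl, hpE, hlen⟩ := Nat.sInf_mem (hreach x y)
  refine ⟨m, p, rfl, rfl, hpE, le_antisymm ?_ (pathDist_le_sum_pathDist hreach p m)⟩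
  rw [← pathDist_eq_sInf] at hlen
  exact hlen ▸ sum_le_sum fun k hk => pathDist_le_of_edge (hpE k (mem_range.1 hk))

end PathDist

section Coupling

variable [Fintype Ω]

noncomputable def tvDist (μ ν : Ω → ℝ) : ℝ := (1 / 2) * ∑ x, |μ x - ν x|

structure IsCoupling (μ ν : Ω → ℝ) (γ : Ω → Ω → ℝ) : Prop where
  nonneg : ∀ a b, 0 ≤ γ a b
  fst_marginal : ∀ a, ∑ b, γ a b = μ a
  snd_marginal : ∀ b, ∑ a, γ a b = ν b

def transportCost (γ c : Ω → Ω → ℝ) : ℝ := ∑ a, ∑ b, γ a b * c a b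

variable {μ ν : Ω → ℝ} {γ c : Ω → Ω → ℝ}

namespace IsCoupling

lemma le_fst (hγ : IsCoupling μ ν γ) (a b : Ω) : γ a b ≤ μ a :=
  hγ.fst_marginal a ▸ single_le_sum (fun b _ => hγ.nonneg a b) (mem_univ b)

lemma le_snd (hγ : IsCoupling μ ν γ) (a b : Ω) : γ a b ≤ ν b :=
  hγ.snd_marginal b ▸ single_le_sum (fun a _ => hγ.nonneg a b) (mem_univ a)

lemma transportCost_nonneg (hγ : IsCoupling μ ν γ) (hc : ∀ a b, 0 ≤ c a b) :
    0 ≤ transportCost γ c :=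
  sum_nonneg fun a _ => sum_nonneg fun b _ => mul_nonneg (hγ.nonneg a b) (hc a b)

lemma tvDist_le_transportCost (hγ : IsCoupling μ ν γ) (hc₀ : ∀ a b, 0 ≤ c a b)
    (hc₁ : ∀ a b, a ≠ b → 1 ≤ c a b) : tvDist μ ν ≤ transportCost γ c := by
  have hpair : ∀ a b, |γ a b - γ b a| ≤ γ a b * c a b + γ b a * c b a := by
    intro a b
    have h₁ := mul_nonneg (hγ.nonneg a b) (hc₀ a b)
    have h₂ := mul_nonneg (hγ.nonneg b a) (hc₀ b a)
    rcases eq_or_ne a b with rfl | hab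
    · simp only [sub_self, abs_zero]; positivity
    · calc |γ a b - γ b a| ≤ γ a b + γ b a := by
            rw [abs_le]; constructor <;> linarith [hγ.nonneg a b, hγ.nonneg b a]
        _ ≤ γ a b * c a b + γ b a * c b a := by
          gcongr
          · exact le_mul_of_one_le_right (hγ.nonneg a b) (hc₁ a b hab)
          · exact le_mul_of_one_le_right (hγ.nonneg b a) (hc₁ b a hab.symm)
  calc tvDist μ ν = (1 / 2) * ∑ a, |∑ b, (γ a b - γ b a)| := by
        simp only [tvDist, sum_sub_distrib, hγ.fst_marginal, hγ.snd_marginal]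
    _ ≤ (1 / 2) * ∑ a, ∑ b, (γ a b * c a b + γ b a * c b a) := by
        gcongr with a
        exact (abs_sum_le_sum_abs _ _).trans (sum_le_sum fun b _ => hpair a b)
    _ = transportCost γ c := by
        rw [sum_congr rfl fun a _ => sum_add_distrib, sum_add_distrib,
          sum_comm (f := fun a b => γ b a * c b a), transportCost]
        ring

end IsCoupling

end Coupling

section Constructions

variable [Fintype Ω] {μ ν ρ : Ω → ℝ} {γ γ₁ γ₂ c : Ω → Ω → ℝ}

lemma isCoupling_diagonal [DecidableEq Ω] (hμ : ∀ a, 0 ≤ μ a) :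
    IsCoupling μ μ (diagonal μ) where
  nonneg a b := by by_cases h : a = b <;> simp [h, hμ]
  fst_marginal a := by simp [diagonal_apply]
  snd_marginal b := by simp [diagonal_apply]

lemma transportCost_diagonal [DecidableEq Ω] (hc : ∀ a, c a a = 0) :
    transportCost (diagonal μ) c = 0 := by
  simp [transportCost, diagonal_apply, hc]

lemma isCoupling_mul (hμ₀ : ∀ a, 0 ≤ μ a) (hν₀ : ∀ b, 0 ≤ ν b) (hμ₁ : ∑ a, μ a = 1)
    (hν₁ : ∑ b, ν b = 1) : IsCoupling μ ν (fun a b => μ a * ν b) where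
  nonneg a b := mul_nonneg (hμ₀ a) (hν₀ b)
  fst_marginal a := by rw [← mul_sum, hν₁, mul_one]
  snd_marginal b := by rw [← sum_mul, hμ₁, one_mul]

-- `γ₁ a b = 0` whenever `ν b = 0`, so the junk value `x / 0 = 0` does no harm.
noncomputable def glueCoupling (γ₁ γ₂ : Ω → Ω → ℝ) (ν : Ω → ℝ) : Ω → Ω → ℝ :=
  fun a d => ∑ b, γ₁ a b * γ₂ b d / ν b

namespace IsCoupling

lemma sum_glue_fst (h₁ : IsCoupling μ ν γ₁) (h₂ : IsCoupling ν ρ γ₂) (a b : Ω) :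
    ∑ d, γ₁ a b * γ₂ b d / ν b = γ₁ a b := by
  rw [← sum_div, ← mul_sum, h₂.fst_marginal]
  exact mul_div_cancel_of_imp fun h => le_antisymm (h ▸ h₁.le_snd a b) (h₁.nonneg a b)

lemma sum_glue_snd (h₁ : IsCoupling μ ν γ₁) (h₂ : IsCoupling ν ρ γ₂) (b d : Ω) :
    ∑ a, γ₁ a b * γ₂ b d / ν b = γ₂ b d := by
  rw [← sum_div, ← sum_mul, h₁.snd_marginal]
  exact mul_div_cancel_left_of_imp fun h => le_antisymm (h ▸ h₂.le_fst b d) (h₂.nonneg b d)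

lemma glue (h₁ : IsCoupling μ ν γ₁) (h₂ : IsCoupling ν ρ γ₂) :
    IsCoupling μ ρ (glueCoupling γ₁ γ₂ ν) where
  nonneg a d := sum_nonneg fun b _ => div_nonneg (mul_nonneg (h₁.nonneg a b) (h₂.nonneg b d))
    ((h₁.nonneg a b).trans (h₁.le_snd a b))
  fst_marginal a := by
    simp only [glueCoupling]
    rw [sum_comm]
    simp only [sum_glue_fst h₁ h₂, h₁.fst_marginal]
  snd_marginal d := by
    simp only [glueCoupling]
    rw [sum_comm]
    simp only [sum_glue_snd h₁ h₂, h₂.snd_marginal]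

lemma transportCost_glue_le (h₁ : IsCoupling μ ν γ₁) (h₂ : IsCoupling ν ρ γ₂)
    (hc : ∀ a b d, c a d ≤ c a b + c b d) :
    transportCost (glueCoupling γ₁ γ₂ ν) c ≤ transportCost γ₁ c + transportCost γ₂ c := by
  have hX : ∀ a b d, 0 ≤ γ₁ a b * γ₂ b d / ν b := fun a b d =>
    div_nonneg (mul_nonneg (h₁.nonneg a b) (h₂.nonneg b d)) ((h₁.nonneg a b).trans (h₁.le_snd a b))
  calc transportCost (glueCoupling γ₁ γ₂ ν) c
      = ∑ a, ∑ d, ∑ b, γ₁ a b * γ₂ b d / ν b * c a d := by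
        simp only [transportCost, glueCoupling, sum_mul]
    _ ≤ ∑ a, ∑ d, ∑ b, γ₁ a b * γ₂ b d / ν b * (c a b + c b d) := by
        gcongr with a _ d _ b _
        · exact hX a b d
        · exact hc a b d
    _ = ∑ a, ∑ b, (∑ d, γ₁ a b * γ₂ b d / ν b) * c a b
          + ∑ b, ∑ d, (∑ a, γ₁ a b * γ₂ b d / ν b) * c b d := by
        simp only [mul_add, sum_add_distrib, sum_mul]
        congr 1
        · exact sum_congr rfl fun a _ => sum_comm
        · rw [sum_comm]
          refine (sum_congr rfl fun d _ => sum_comm).trans sum_comm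
    _ = transportCost γ₁ c + transportCost γ₂ c := by
        simp only [sum_glue_fst h₁ h₂, sum_glue_snd h₁ h₂, transportCost]

end IsCoupling

end Constructions

section Iteration

variable [Fintype Ω] {μ ν : Ω → ℝ} {g k : Ω → Ω → ℝ}

def bindCoupling (g : Ω → Ω → ℝ) (Γ : Ω → Ω → Ω → Ω → ℝ) : Ω → Ω → ℝ :=
  fun a b => ∑ c, ∑ d, g c d * Γ c d a b

lemma IsCoupling.bind {Q R : Matrix Ω Ω ℝ} {Γ : Ω → Ω → Ω → Ω → ℝ} (hg : IsCoupling μ ν g)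
    (hΓ : ∀ c d, IsCoupling (Q c) (R d) (Γ c d)) :
    IsCoupling (μ ᵥ* Q) (ν ᵥ* R) (bindCoupling g Γ) where
  nonneg a b := sum_nonneg fun c _ => sum_nonneg fun d _ =>
    mul_nonneg (hg.nonneg c d) ((hΓ c d).nonneg a b)
  fst_marginal a := by
    simp only [bindCoupling, vecMul, dotProduct, ← hg.fst_marginal, sum_mul]
    rw [sum_comm]
    refine sum_congr rfl fun c _ => ?_
    rw [sum_comm]
    simp only [← mul_sum, (hΓ _ _).fst_marginal]
  snd_marginal b := by
    simp only [bindCoupling, vecMul, dotProduct, ← hg.snd_marginal, sum_mul]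
    rw [sum_comm]
    conv_lhs => enter [2, c]; rw [sum_comm]
    rw [sum_comm]
    simp only [← mul_sum, (hΓ _ _).snd_marginal]

lemma transportCost_bindCoupling (Γ : Ω → Ω → Ω → Ω → ℝ) :
    transportCost (bindCoupling g Γ) k = ∑ c, ∑ d, g c d * transportCost (Γ c d) k := by
  simp only [transportCost, bindCoupling, sum_mul, mul_sum, mul_assoc]
  calc ∑ a, ∑ b, ∑ c, ∑ d, g c d * (Γ c d a b * k a b)
      = ∑ ab : Ω × Ω, ∑ cd : Ω × Ω, g cd.1 cd.2 * (Γ cd.1 cd.2 ab.1 ab.2 * k ab.1 ab.2) := by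
        simp only [Fintype.sum_prod_type]
    _ = ∑ cd : Ω × Ω, ∑ ab : Ω × Ω, g cd.1 cd.2 * (Γ cd.1 cd.2 ab.1 ab.2 * k ab.1 ab.2) :=
        sum_comm
    _ = _ := by simp only [Fintype.sum_prod_type]

end Iteration

section MarkovChain

variable [Fintype Ω] [DecidableEq Ω] {P : Matrix Ω Ω ℝ} {c : Ω → Ω → ℝ} {β : ℝ}

lemma isCoupling_one_row (x y : Ω) :
    IsCoupling ((1 : Matrix Ω Ω ℝ) x) ((1 : Matrix Ω Ω ℝ) y)
      (fun a b => (1 : Matrix Ω Ω ℝ) x a * (1 : Matrix Ω Ω ℝ) y b) :=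
  isCoupling_mul (fun a => by by_cases h : x = a <;> simp [one_apply, h])
    (fun b => by by_cases h : y = b <;> simp [one_apply, h]) (by simp [one_apply])
    (by simp [one_apply])

lemma exists_coupling_pow (hβ : 0 ≤ β)
    (hP : ∀ x y, ∃ γ, IsCoupling (P x) (P y) γ ∧ transportCost γ c ≤ β * c x y) (t : ℕ) :
    ∀ x y, ∃ γ, IsCoupling ((P ^ t) x) ((P ^ t) y) γ ∧ transportCost γ c ≤ β ^ t * c x y := by
  induction t with
  | zero =>
    intro x y
    refine ⟨_, isCoupling_one_row x y, le_of_eq ?_⟩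
    simp [transportCost, one_apply]
  | succ t ih =>
    intro x y
    choose Γ hΓ hΓc using ih
    obtain ⟨g, hg, hgc⟩ := hP x y
    have hrow : ∀ z, (P ^ (t + 1)) z = P z ᵥ* P ^ t := fun z =>
      funext fun a => by rw [pow_succ', mul_apply]; rfl
    refine ⟨bindCoupling g Γ, hrow x ▸ hrow y ▸ hg.bind hΓ, ?_⟩
    calc transportCost (bindCoupling g Γ) c
        = ∑ a, ∑ b, g a b * transportCost (Γ a b) c := transportCost_bindCoupling Γ
      _ ≤ ∑ a, ∑ b, g a b * (β ^ t * c a b) := by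
          gcongr with a _ b _
          exacts [hg.nonneg a b, hΓc a b]
      _ = β ^ t * transportCost g c := by
          simp only [transportCost, mul_sum]
          exact sum_congr rfl fun a _ => sum_congr rfl fun b _ => by ring
      _ ≤ β ^ t * (β * c x y) := by gcongr
      _ = β ^ (t + 1) * c x y := by ring

end MarkovChain

section PathCoupling

variable [Fintype Ω] [DecidableEq Ω] {μ : Ω → Ω → ℝ} {c : Ω → Ω → ℝ} {β : ℝ}
  {E : Ω → Ω → Prop}

lemma exists_coupling_of_path (hμ : ∀ x a, 0 ≤ μ x a) (hc_self : ∀ a, c a a = 0)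
    (hc_triangle : ∀ a b d, c a d ≤ c a b + c b d)
    (hE : ∀ x y, E x y → ∃ γ, IsCoupling (μ x) (μ y) γ ∧ transportCost γ c ≤ β * c x y)
    (p : ℕ → Ω) (m : ℕ) (hp : ∀ k < m, E (p k) (p (k + 1))) :
    ∃ γ, IsCoupling (μ (p 0)) (μ (p m)) γ ∧
      transportCost γ c ≤ β * ∑ k ∈ range m, c (p k) (p (k + 1)) := by
  induction m with
  | zero =>
    exact ⟨_, isCoupling_diagonal (hμ _), by simp [transportCost_diagonal hc_self]⟩
  | succ m ih =>
    obtain ⟨γ₁, h₁, hc₁⟩ := ih fun k hk => hp k (by omega)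
    obtain ⟨γ₂, h₂, hc₂⟩ := hE _ _ (hp m m.lt_succ_self)
    refine ⟨_, h₁.glue h₂, ?_⟩
    calc transportCost (glueCoupling γ₁ γ₂ (μ (p m))) c
        ≤ transportCost γ₁ c + transportCost γ₂ c := h₁.transportCost_glue_le h₂ hc_triangle
      _ ≤ β * ∑ k ∈ range (m + 1), c (p k) (p (k + 1)) := by
          rw [sum_range_succ, mul_add]
          exact add_le_add hc₁ hc₂

variable {w : Ω → Ω → ℕ}

lemma exists_coupling_pathDist (hμ : ∀ x a, 0 ≤ μ x a)
    (hreach : ∀ x y, (pathWeights E w x y).Nonempty)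
    (hE : ∀ x y, E x y → ∃ γ, IsCoupling (μ x) (μ y) γ ∧
      transportCost γ (fun a b => (pathDist E w a b : ℝ)) ≤ β * pathDist E w x y)
    (x y : Ω) :
    ∃ γ, IsCoupling (μ x) (μ y) γ ∧
      transportCost γ (fun a b => (pathDist E w a b : ℝ)) ≤ β * pathDist E w x y := by
  obtain ⟨m, p, rfl, rfl, hpE, hlen⟩ := exists_geodesic hreach x y
  obtain ⟨γ, hγ, hcost⟩ := exists_coupling_of_path hμ (by simp [pathDist_self])
    (fun a b d => by exact_mod_cast pathDist_triangle hreach a b d) hE p m hpE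
  refine ⟨γ, hγ, hcost.trans_eq ?_⟩
  rw [← hlen, Nat.cast_sum]

end PathCoupling

lemma tvDist_vecMul_le [Fintype Ω] {ι κ : Type*} [Fintype ι] [Fintype κ]
    {a : ι → ℝ} {b : κ → ℝ} (ha₀ : ∀ i, 0 ≤ a i) (ha₁ : ∑ i, a i = 1) (hb₀ : ∀ j, 0 ≤ b j)
    (hb₁ : ∑ j, b j = 1) {M : Matrix ι Ω ℝ} {N : Matrix κ Ω ℝ} {r : ℝ}
    (h : ∀ i j, tvDist (M i) (N j) ≤ r) :
    tvDist (a ᵥ* M) (b ᵥ* N) ≤ r := by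
  have hdiff : ∀ x, (a ᵥ* M) x - (b ᵥ* N) x = ∑ i, ∑ j, a i * b j * (M i x - N j x) := by
    intro x
    simp only [mul_sub, sum_sub_distrib]
    rw [sum_comm (f := fun i j => a i * b j * N j x)]
    simp [vecMul, dotProduct, mul_comm (a _) (b _), mul_assoc, ← mul_sum, ← sum_mul, ha₁, hb₁]
  calc tvDist (a ᵥ* M) (b ᵥ* N) = 1 / 2 * ∑ x, |∑ i, ∑ j, a i * b j * (M i x - N j x)| := by
        simp only [tvDist, hdiff]
    _ ≤ 1 / 2 * ∑ x, ∑ i, ∑ j, a i * b j * |M i x - N j x| := by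
        gcongr with x
        refine (abs_sum_le_sum_abs _ _).trans (sum_le_sum fun i _ => ?_)
        refine (abs_sum_le_sum_abs _ _).trans_eq (sum_congr rfl fun j _ => ?_)
        rw [abs_mul, abs_of_nonneg (mul_nonneg (ha₀ i) (hb₀ j))]
    _ = ∑ i, ∑ j, a i * b j * tvDist (M i) (N j) := by
        simp only [tvDist, mul_sum]
        rw [sum_comm]
        refine sum_congr rfl fun i _ => ?_
        rw [sum_comm]
        exact sum_congr rfl fun j _ => sum_congr rfl fun x _ => by ring
    _ ≤ ∑ i, ∑ j, a i * b j * r := by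
        gcongr with i _ j _
        · exact mul_nonneg (ha₀ i) (hb₀ j)
        · exact h i j
    _ = r := by simp [← sum_mul, ← mul_sum, ha₁, hb₁]

lemma vecMul_pow_eq_self {α : Type*} [Semiring α] [Fintype Ω] [DecidableEq Ω] {v : Ω → α}
    {P : Matrix Ω Ω α} (h : v ᵥ* P = v) (t : ℕ) : v ᵥ* P ^ t = v := by
  induction t with
  | zero => simp
  | succ t ih => rw [pow_succ, ← vecMul_vecMul, ih, h]

lemma pow_mul_le_of_log_div_le {β D ε : ℝ} {t : ℕ} (hβ₀ : 0 ≤ β) (hβ₁ : β < 1) (hD : 0 ≤ D)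
    (hε : 0 < ε) (ht : Real.log (D / ε) / (1 - β) ≤ t) : β ^ t * D ≤ ε := by
  rcases hD.eq_or_lt with rfl | hD
  · simpa using hε.le
  have hlog : Real.log (D / ε) ≤ (1 - β) * t := by
    rwa [div_le_iff₀ (by linarith), mul_comm] at ht
  calc β ^ t * D ≤ Real.exp (-(1 - β)) ^ t * D := by
        gcongr
        linarith [Real.add_one_le_exp (-(1 - β))]
    _ = Real.exp (-((1 - β) * t)) * D := by rw [← Real.exp_nat_mul]; ring_nf
    _ ≤ Real.exp (-Real.log (D / ε)) * D := by gcongr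
    _ = ε := by
        rw [Real.exp_neg, Real.exp_log (by positivity)]
        field_simp

end

theorem stmt13_general {Ω : Type*} [Fintype Ω] [DecidableEq Ω]
    (P : Matrix Ω Ω ℝ)
    (hP0 : ∀ x y, 0 ≤ P x y)
    (π : Ω → ℝ) (hπ0 : ∀ x, 0 ≤ π x) (hπ1 : ∑ x, π x = 1)
    (hπstat : ∀ y, ∑ x, π x * P x y = π y)
    (E : Ω → Ω → Prop) (w : Ω → Ω → ℕ)
    (D : ℕ) (hD : ∀ x y, pathDist E w x y ≤ D)
    (hδpos : ∀ x y, pathDist E w x y = 0 ↔ x = y)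
    (β : ℝ) (hβ : β < 1)
    (hcouple : ∀ x y, E x y → ∃ γ : Ω → Ω → ℝ,
      (∀ a b, 0 ≤ γ a b) ∧
      (∀ a, ∑ b, γ a b = P x a) ∧
      (∀ b, ∑ a, γ a b = P y b) ∧
      ∑ a, ∑ b, γ a b * (pathDist E w a b : ℝ) ≤ β * (pathDist E w x y : ℝ)) :
    ∀ ε : ℝ, 0 < ε →
      ∀ p₀ : Ω → ℝ, (∀ x, 0 ≤ p₀ x) → (∑ x, p₀ x = 1) →
        ∀ t : ℕ, Real.log ((D : ℝ) / ε) / (1 - β) ≤ (t : ℝ) →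
          (1 / 2) * ∑ x, |(∑ y, p₀ y * (P ^ t) y x) - π x| ≤ ε := by
  intro ε hε p₀ hp₀ hp₀1 t ht
  set δ : Ω → Ω → ℝ := fun a b => (pathDist E w a b : ℝ)
  have hδ₀ : ∀ a b, 0 ≤ δ a b := fun _ _ => Nat.cast_nonneg _
  have hδ₁ : ∀ a b, a ≠ b → 1 ≤ δ a b := fun a b hab =>
    Nat.one_le_cast.2 (Nat.one_le_iff_ne_zero.2 (mt (hδpos a b).1 hab))
  have hpair := exists_coupling_pathDist hP0 (pathWeights_nonempty fun x y => (hδpos x y).1)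
    fun x y hxy => (hcouple x y hxy).imp fun _ ⟨h₀, h₁, h₂, hc⟩ => ⟨⟨h₀, h₁, h₂⟩, hc⟩
  have hrows : ∀ y z, tvDist ((P ^ t) y) ((P ^ t) z) ≤ ε := by
    intro y z
    rcases le_or_gt 0 β with hβ₀ | hβ₀
    · obtain ⟨γ, hγ, hcost⟩ := exists_coupling_pow hβ₀ hpair t y z
      calc tvDist ((P ^ t) y) ((P ^ t) z) ≤ transportCost γ δ :=
            hγ.tvDist_le_transportCost hδ₀ hδ₁
        _ ≤ β ^ t * D := hcost.trans (by gcongr; exact_mod_cast hD y z)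
        _ ≤ ε := pow_mul_le_of_log_div_le hβ₀ hβ D.cast_nonneg hε ht
    · obtain ⟨γ, hγ, hcost⟩ := hpair y z
      have hyz : δ y z ≤ 0 :=
        nonpos_of_mul_nonneg_right ((hγ.transportCost_nonneg hδ₀).trans hcost) hβ₀
      obtain rfl : y = z := by_contra fun hne => by linarith [hδ₁ y z hne]
      simpa [tvDist] using hε.le
  calc (1 / 2) * ∑ x, |(∑ y, p₀ y * (P ^ t) y x) - π x|
      = tvDist (Matrix.vecMul p₀ (P ^ t)) (Matrix.vecMul π (P ^ t)) := by
        rw [vecMul_pow_eq_self (funext hπstat)]; rfl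
    _ ≤ ε := tvDist_vecMul_le hp₀ hp₀1 hπ0 hπ1 hrows

/-- Path coupling theorem (Bubley–Dyer): if an ergodic Markov chain with transition
matrix `P` and stationary distribution `π` admits, for each edge `(x,y)` of a weighted
graph `Γ` whose shortest-path quasi-metric `δ` is bounded by `D`, a coupling of the
one-step distributions from `x` and `y` contracting `δ` in expectation by a factor
`β < 1`, then `t_mix(ε) ≤ log(D/ε)/(1−β)`. -/
theorem stmt13 {Ω : Type*} [Fintype Ω] [DecidableEq Ω] [Nonempty Ω]
    (P : Matrix Ω Ω ℝ)
    (hP0 : ∀ x y, 0 ≤ P x y) (hP1 : ∀ x, ∑ y, P x y = 1)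
    (hErg : ∃ t : ℕ, ∀ x y, 0 < (P ^ t) x y)
    (π : Ω → ℝ) (hπ0 : ∀ x, 0 ≤ π x) (hπ1 : ∑ x, π x = 1)
    (hπstat : ∀ y, ∑ x, π x * P x y = π y)
    (E : Ω → Ω → Prop) (w : Ω → Ω → ℕ)
    (D : ℕ) (hD : ∀ x y, pathDist E w x y ≤ D)
    (hδpos : ∀ x y, pathDist E w x y = 0 ↔ x = y)
    (β : ℝ) (hβ : β < 1)
    (hcouple : ∀ x y, E x y → ∃ γ : Ω → Ω → ℝ,
      (∀ a b, 0 ≤ γ a b) ∧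
      (∀ a, ∑ b, γ a b = P x a) ∧
      (∀ b, ∑ a, γ a b = P y b) ∧
      ∑ a, ∑ b, γ a b * (pathDist E w a b : ℝ) ≤ β * (pathDist E w x y : ℝ)) :
    ∀ ε : ℝ, 0 < ε →
      ∀ p₀ : Ω → ℝ, (∀ x, 0 ≤ p₀ x) → (∑ x, p₀ x = 1) →
        ∀ t : ℕ, Real.log ((D : ℝ) / ε) / (1 - β) ≤ (t : ℝ) →
          (1 / 2) * ∑ x, |(∑ y, p₀ y * (P ^ t) y x) - π x| ≤ ε :=
  stmt13_general P hP0 π hπ0 hπ1 hπstat E w D hD hδpos β hβ hcouple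
end

section
/- Let q ≥ 2Δ + 2, let G be a graph of maximum degree Δ with q-list assignment L, let G' be obtained from G by deleting one edge uv, and let Ω and Ω' be the sets of L-packings of G and G' respectively. Then Ω ⊆ Ω' and |Ω| / |Ω'| ≥ 1/(1 + q!). -/
/-!
A packing of `G - uv` becomes a packing of `G` after re-choosing only the permutation at `u`:
at each position `i` the neighbours of `u` forbid at most `Δ` entries of the list of `u`, and
each entry is forbidden at at most `Δ` positions, so for `q ≥ 2Δ` Hall's theorem yields a
permutation avoiding all of them. The repaired packing agrees with the original away from `u`,
so each packing of `G` is hit by at most `q!` packings of `G - uv`. The same repair, applied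
vertex by vertex, shows that `G` has a packing at all.
-/

open Equiv Finset
open scoped Classical

theorem card_filter_exists_eq_le {ι α β : Type*} [Fintype α] (N : Finset ι) (f : ι → α → β)
    (hf : ∀ w, Function.Injective (f w)) (g : ι → β) :
    #{x | ∃ w ∈ N, f w x = g w} ≤ #N :=
  calc #{x | ∃ w ∈ N, f w x = g w}
      ≤ #(N.biUnion fun w => {x | f w x = g w}) :=
        card_le_card fun x hx => by simpa using hx
    _ ≤ ∑ w ∈ N, #{x | f w x = g w} := card_biUnion_le
    _ ≤ ∑ _w ∈ N, 1 := sum_le_sum fun w _ => card_le_one.2 fun x hx y hy =>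
        hf w <| by rw [(mem_filter.1 hx).2, (mem_filter.1 hy).2]
    _ = #N := by simp

theorem exists_perm_forall_mem {α : Type*} [Fintype α] (A : α → Finset α) (d : ℕ)
    (hd : 2 * d ≤ Fintype.card α) (hrow : ∀ i, #(A i)ᶜ ≤ d) (hcol : ∀ c, #{i | c ∉ A i} ≤ d) :
    ∃ σ : Perm α, ∀ i, σ i ∈ A i := by
  have hall : ∀ s : Finset α, #s ≤ #(s.biUnion A) := by
    intro s
    rcases s.eq_empty_or_nonempty with rfl | ⟨i, hi⟩
    · simp
    by_cases hs : #s + d ≤ Fintype.card α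
    · have := card_add_card_compl (A i)
      have := hrow i
      exact (show #s ≤ #(A i) by omega).trans (card_le_card (subset_biUnion_of_mem A hi))
    -- a large `s` is hit by every column `c`, since `c` lies outside at most `d` rows
    · suffices s.biUnion A = univ by rw [this]; exact card_le_univ s
      refine eq_univ_of_forall fun c => ?_
      by_contra hc
      have : s ⊆ ({i | c ∉ A i} : Finset α) := fun j hj =>
        mem_filter.2 ⟨mem_univ j, fun hcj => hc <| mem_biUnion.2 ⟨j, hj, hcj⟩⟩
      have := (card_le_card this).trans (hcol c)
      omega
  obtain ⟨f, hf, hfA⟩ := (all_card_le_biUnion_card_iff_exists_injective A).1 hall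
  exact ⟨.ofBijective f (Finite.injective_iff_bijective.1 hf), hfA⟩

theorem exists_perm_avoiding {V κ β : Type*} [Fintype κ] {Δ : ℕ} (hΔ : 2 * Δ ≤ Fintype.card κ)
    (L : V → κ → β) (hL : ∀ v, Function.Injective (L v)) (ω : V → Perm κ) (a : V)
    (N : Finset V) (hN : #N ≤ Δ) :
    ∃ σ : Perm κ, ∀ i, ∀ w ∈ N, L a (σ i) ≠ L w (ω w i) := by
  obtain ⟨σ, hσ⟩ := exists_perm_forall_mem (fun i => {c | ∀ w ∈ N, L a c ≠ L w (ω w i)}) Δ hΔ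
    (fun i => by
      simpa only [compl_filter, not_forall, not_not, exists_prop] using
        (card_filter_exists_eq_le N (fun _ => L a) (fun _ => hL a) (fun w => L w (ω w i))).trans hN)
    (fun c => by
      simpa only [mem_filter, mem_univ, true_and, not_forall, not_not, exists_prop, eq_comm,
          Function.comp_apply] using
        (card_filter_exists_eq_le N (fun w => L w ∘ ω w) (fun w => (hL w).comp (ω w).injective)
          (fun _ => L a c)).trans hN)
  exact ⟨σ, fun i => (mem_filter.1 (hσ i)).2⟩

theorem card_le_card_mul_card_image_update {α β : Type*} [DecidableEq α] [Fintype β]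
    (s : Finset (α → β)) (u : α) (f : (α → β) → β) :
    #s ≤ Fintype.card β * #(s.image fun ω => Function.update ω u (f ω)) := by
  refine card_le_mul_card_image s _ fun b _ => ?_
  refine (card_le_card_of_injOn (· u) (fun _ _ => mem_coe.2 (mem_univ _)) ?_).trans_eq card_univ
  intro ω₁ h₁ ω₂ h₂ hu
  funext w
  rcases eq_or_ne w u with rfl | hw
  · exact hu
  · have h₁ := congrFun (mem_filter.1 h₁).2 w
    have h₂ := congrFun (mem_filter.1 h₂).2 w
    rwa [Function.update_of_ne hw, ← h₂, Function.update_of_ne hw] at h₁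

theorem card_le_one_add_mul_card_of_update {α β : Type*} [DecidableEq α] [Fintype β]
    {s t : Finset (α → β)} (hst : s ⊆ t) (u : α) (f : (α → β) → β)
    (hf : ∀ ω ∈ t, ω ∉ s → Function.update ω u (f ω) ∈ s) :
    #t ≤ (1 + Fintype.card β) * #s := by
  have hsdiff : #(t \ s) ≤ Fintype.card β * #s :=
    (card_le_card_mul_card_image_update (t \ s) u f).trans <|
      Nat.mul_le_mul_left _ <| card_le_card <| image_subset_iff.2 fun ω hω =>
        hf ω (mem_sdiff.1 hω).1 (mem_sdiff.1 hω).2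
  have := card_sdiff_add_card_eq_card hst
  linarith

theorem one_div_one_add_le_div {a b c : ℕ} (ha : 0 < a) (h : a ≤ (1 + c) * b) :
    1 / (1 + c : ℝ) ≤ b / a := by
  rw [div_le_div_iff₀ (by positivity) (by exact_mod_cast ha), one_mul, mul_comm]
  exact_mod_cast h

theorem SimpleGraph.deleteIncidenceSet_le_deleteEdges {V : Type*} (G : SimpleGraph V) {u : V}
    {s : Set (Sym2 V)} (hs : ∀ e ∈ s, u ∈ e) : G.deleteIncidenceSet u ≤ G.deleteEdges s :=
  fun x y h => by
    rw [deleteIncidenceSet_adj] at h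
    exact deleteEdges_adj.2 ⟨h.1, fun he => by
      rcases Sym2.mem_iff.1 (hs _ he) with rfl | rfl
      exacts [h.2.1 rfl, h.2.2 rfl]⟩

section Packing

variable {V : Type*} {q : ℕ} {L : V → Fin q → ℕ}

theorem IsPacking.mono {G H : SimpleGraph V} (hHG : H ≤ G) {ω : V → Perm (Fin q)}
    (hω : IsPacking G L ω) : IsPacking H L ω :=
  fun i v w hvw => hω i v w (hHG hvw)

theorem IsPacking.exists_update [Fintype V] [DecidableEq V] {G : SimpleGraph V} {Δ : ℕ}
    (hq : 2 * Δ ≤ q) (hL : ∀ v, Function.Injective (L v)) {u : V} (hu : #{w | G.Adj u w} ≤ Δ)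
    {ω : V → Perm (Fin q)} (hω : IsPacking (G.deleteIncidenceSet u) L ω) :
    ∃ σ, IsPacking G L (Function.update ω u σ) := by
  obtain ⟨σ, hσ⟩ := exists_perm_avoiding (by simpa using hq) L hL ω u _ hu
  refine ⟨σ, fun i x y hxy => ?_⟩
  have hσ' : ∀ w, G.Adj u w → L u (σ i) ≠ L w (ω w i) := fun w h => hσ i w (by simpa using h)
  rcases eq_or_ne x u with rfl | hx
  · rw [Function.update_self, Function.update_of_ne hxy.ne.symm]
    exact hσ' y hxy
  rcases eq_or_ne y u with rfl | hy
  · rw [Function.update_self, Function.update_of_ne hx]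
    exact (hσ' x hxy.symm).symm
  rw [Function.update_of_ne hx, Function.update_of_ne hy]
  exact hω i x y (G.deleteIncidenceSet_adj.2 ⟨hxy, hx, hy⟩)

theorem exists_isPacking [Fintype V] [DecidableEq V] {Δ : ℕ} (hq : 2 * Δ ≤ q)
    (hL : ∀ v, Function.Injective (L v)) (G : SimpleGraph V) (hΔ : ∀ v, #{w | G.Adj v w} ≤ Δ) :
    ∃ ω, IsPacking G L ω := by
  induction G using WellFoundedLT.induction with
  | _ G ih =>
  by_cases hG : ∃ u v, G.Adj u v
  · obtain ⟨u, v, huv⟩ := hG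
    have hlt : G.deleteIncidenceSet u < G := (G.deleteIncidenceSet_le u).lt_of_ne fun h => by
      have := congrArg (fun H : SimpleGraph V => H.Adj u v) h
      simp [SimpleGraph.deleteIncidenceSet_adj, huv] at this
    obtain ⟨ω, hω⟩ := ih _ hlt fun v => (card_le_card fun w hw => by
      simp only [mem_filter, mem_univ, true_and, SimpleGraph.deleteIncidenceSet_adj] at hw ⊢
      exact hw.1).trans (hΔ v)
    obtain ⟨σ, hσ⟩ := hω.exists_update hq hL (hΔ u)
    exact ⟨_, hσ⟩
  · push Not at hG
    exact ⟨1, fun _ v w h => (hG v w h).elim⟩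

end Packing

theorem stmt16_general {V : Type*} [Fintype V] [DecidableEq V] (G : SimpleGraph V) (Δ q : ℕ)
    (hΔ : ∀ v : V, (univ.filter (fun w => G.Adj v w)).card ≤ Δ)
    (hq : 2 * Δ + 2 ≤ q)
    (L : V → Fin q → ℕ) (hLinj : ∀ v, Function.Injective (L v))
    (u v : V)
    (Ω Ω' : Finset (V → Perm (Fin q)))
    (hΩ : Ω = univ.filter (fun ω => IsPacking G L ω))
    (hΩ' : Ω' = univ.filter (fun ω => IsPacking (G.deleteEdges {s(u, v)}) L ω)) :
    Ω ⊆ Ω' ∧ 1 / (1 + (Nat.factorial q : ℝ)) ≤ (Ω.card : ℝ) / (Ω'.card : ℝ) := by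
  have hq' : 2 * Δ ≤ q := by omega
  have hsub : Ω ⊆ Ω' := by
    intro ω
    simp only [hΩ, hΩ', mem_filter, mem_univ, true_and]
    exact IsPacking.mono (G.deleteEdges_le _)
  have hrepair : ∀ ω ∈ Ω', ∃ σ, IsPacking G L (Function.update ω u σ) := fun ω hω =>
    IsPacking.exists_update hq' hLinj (hΔ u) <|
      IsPacking.mono (G.deleteIncidenceSet_le_deleteEdges (by simp)) (mem_filter.1 (hΩ' ▸ hω)).2
  choose! σ hσ using hrepair
  have hΩ'le : #Ω' ≤ (1 + q.factorial) * #Ω := by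
    simpa only [Fintype.card_perm, Fintype.card_fin] using
      card_le_one_add_mul_card_of_update hsub u σ fun ω hω _ =>
        hΩ ▸ mem_filter.2 ⟨mem_univ _, hσ ω hω⟩
  obtain ⟨ω₀, hω₀⟩ := exists_isPacking hq' hLinj G hΔ
  have hΩ'pos : 0 < #Ω' := card_pos.2 ⟨ω₀, hsub (hΩ ▸ mem_filter.2 ⟨mem_univ _, hω₀⟩)⟩
  exact ⟨hsub, one_div_one_add_le_div hΩ'pos hΩ'le⟩

/-- Deleting one edge `uv`: the set of `L`-packings only grows, and shrinks by a factor
of at most `1 + q!`, for `q ≥ 2Δ + 2`. -/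
theorem stmt16 {V : Type*} [Fintype V] [DecidableEq V] (G : SimpleGraph V) (Δ q : ℕ)
    (hΔ : ∀ v : V, (univ.filter (fun w => G.Adj v w)).card ≤ Δ)
    (hq : 2 * Δ + 2 ≤ q)
    (L : V → Fin q → ℕ) (hLinj : ∀ v, Function.Injective (L v))
    (u v : V) (huv : G.Adj u v)
    (Ω Ω' : Finset (V → Perm (Fin q)))
    (hΩ : Ω = univ.filter (fun ω => IsPacking G L ω))
    (hΩ' : Ω' = univ.filter (fun ω => IsPacking (G.deleteEdges {s(u, v)}) L ω)) :
    Ω ⊆ Ω' ∧ 1 / (1 + (Nat.factorial q : ℝ)) ≤ (Ω.card : ℝ) / (Ω'.card : ℝ) :=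
  stmt16_general G Δ q hΔ hq L hLinj u v Ω Ω' hΩ hΩ'
end
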